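/- arXiv:2206.08426 — 6 statements merged into one kernel-verified Lean document; each statement's English description precedes it below -/
import Mathlib

section
/- Let G be a graph, k ≥ 1, and let U_0, ..., U_s be subsets of V(G) whose union is V(G). Suppose for each i there is a proper k-coloring c^i of the induced subgraph G[B(U_i,1)] (the induced subgraph on the closed 1-neighborhood of U_i) using colors {0,...,k-1}. Define d(x) = 0 if c^i(x) = k-1 for every i with x ∈ B(U_i,1), and otherwise d(x) = (i, c^i(x)) for the least i with x ∈ B(U_i,1) and c^i(x) ≠ k-1. Then d is a proper coloring of G using at most k(s+1) - s colors. -/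
open SimpleGraph

/-- Let `U 0, …, U s` cover `V(G)`, let `B i` be the closed 1-neighborhood of `U i`,
and let `c i` be a proper `k`-coloring of `G[B i]` with colors `{0,…,k-1}`.  Define
`d x = none` ("color 0") if `c i x = k-1` for every `i` with `x ∈ B i`, and otherwise
`d x = some (i, c i x)` for the least `i` with `x ∈ B i` and `c i x ≠ k-1`.  Then `d`
is a proper coloring of `G` using at most `k(s+1) - s` colors. -/
theorem stmt_1 {V : Type*} (G : SimpleGraph V) (s k : ℕ) (hk : 1 ≤ k)
    (U : Fin (s + 1) → Set V) (hCover : ∀ x : V, ∃ i, x ∈ U i)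
    (B : Fin (s + 1) → Set V)
    (hB : ∀ i, B i = {x : V | x ∈ U i ∨ ∃ y ∈ U i, G.Adj x y})
    (c : Fin (s + 1) → V → Fin k)
    (hc : ∀ i, ∀ x ∈ B i, ∀ y ∈ B i, G.Adj x y → c i x ≠ c i y)
    (d : V → Option (Fin (s + 1) × Fin k))
    (hdNone : ∀ x, d x = none ↔ ∀ i, x ∈ B i → (c i x : ℕ) = k - 1)
    (hdSome : ∀ x i m, d x = some (i, m) →
      m = c i x ∧ x ∈ B i ∧ (c i x : ℕ) ≠ k - 1 ∧
      ∀ j < i, x ∈ B j → (c j x : ℕ) = k - 1) :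
    (∀ x y : V, G.Adj x y → d x ≠ d y) ∧
    (Set.range d).ncard ≤ k * (s + 1) - s := by
  constructor
  · intro x y hadj heq
    obtain ⟨i, hxU⟩ := hCover x
    have hxB : x ∈ B i := by rw [hB]; exact Or.inl hxU
    have hyB : y ∈ B i := by rw [hB]; exact Or.inr ⟨x, hxU, hadj.symm⟩
    cases hdx : d x with
    | none =>
      have hdy : d y = none := heq.symm.trans hdx
      have h1 := (hdNone x).1 hdx i hxB
      have h2 := (hdNone y).1 hdy i hyB
      exact hc i x hxB y hyB hadj (Fin.ext (h1.trans h2.symm))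
    | some p =>
      obtain ⟨j, m⟩ := p
      have hdy : d y = some (j, m) := heq.symm.trans hdx
      obtain ⟨hmx, hxBj, _, _⟩ := hdSome x j m hdx
      obtain ⟨hmy, hyBj, _, _⟩ := hdSome y j m hdy
      exact hc j x hxBj y hyBj hadj (by rw [← hmx, ← hmy])
  · have hlast : k - 1 < k := by omega
    set T : Finset (Option (Fin (s + 1) × Fin k)) :=
      insert none (((Finset.univ ×ˢ Finset.univ.filter
        fun m : Fin k => (m : ℕ) ≠ k - 1)).image fun p => some p) with hT
    have hsub : Set.range d ⊆ ↑T := by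
      rintro _ ⟨x, rfl⟩
      cases hdx : d x with
      | none => simp [hT]
      | some p =>
        obtain ⟨i, m⟩ := p
        obtain ⟨hm, _, hne, _⟩ := hdSome x i m hdx
        have : (m : ℕ) ≠ k - 1 := by rw [hm]; exact hne
        simp only [hT, Finset.coe_insert, Set.mem_insert_iff, Finset.coe_image,
          Set.mem_image, Finset.mem_coe]
        refine Or.inr ⟨(i, m), ?_, rfl⟩
        simp [Finset.mem_product, this]
    have h1 : (Set.range d).ncard ≤ T.card := by
      have := Set.ncard_le_ncard hsub T.finite_toSet
      rwa [Set.ncard_coe_finset] at this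
    have hfilter : (Finset.univ.filter fun m : Fin k => (m : ℕ) ≠ k - 1).card = k - 1 := by
      have : (Finset.univ.filter fun m : Fin k => (m : ℕ) ≠ k - 1)
          = Finset.univ.erase ⟨k - 1, hlast⟩ := by
        ext m
        simp [Finset.mem_erase, Fin.ext_iff]
      rw [this, Finset.card_erase_of_mem (Finset.mem_univ _)]
      simp
    have h2 : T.card ≤ (s + 1) * (k - 1) + 1 := by
      calc T.card ≤ (((Finset.univ ×ˢ Finset.univ.filter
            fun m : Fin k => (m : ℕ) ≠ k - 1)).image fun p => some p).card + 1 :=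
            Finset.card_insert_le _ _
        _ ≤ ((Finset.univ ×ˢ Finset.univ.filter
            fun m : Fin k => (m : ℕ) ≠ k - 1)).card + 1 := by
            exact Nat.add_le_add_right (Finset.card_image_le) 1
        _ = (s + 1) * (k - 1) + 1 := by
            rw [Finset.card_product, hfilter]; simp
    have h3 : (s + 1) * (k - 1) + 1 ≤ k * (s + 1) - s := by
      obtain ⟨k', rfl⟩ : ∃ k', k = k' + 1 := ⟨k - 1, by omega⟩
      have e1 : (s + 1) * (k' + 1 - 1) = s * k' + k' := by rw [Nat.add_sub_cancel]; ring
      have e2 : (k' + 1) * (s + 1) = s * k' + k' + s + 1 := by ring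
      omega
    omega
end

section
/- Let G be a locally finite graph on a subset of the natural numbers and g(x) = min over y in the component of x of (y + d(x,y)). For i ∈ {0,1}, let U_i be the set of vertices x with g(x) ≡ i (mod 2). Then g is constant on every connected component of each induced subgraph G[U_i], and every such component is finite. -/
/-- For a graph whose vertices are natural numbers, `gFn G x` is the minimum of
`y + d(x,y)` over all vertices `y` in the connected component of `x`. -/
noncomputable def gFn {V : Set ℕ} (G : SimpleGraph V) (x : V) : ℕ :=
  sInf {n : ℕ | ∃ y : V, G.Reachable x y ∧ n = (y : ℕ) + G.dist x y}

lemma gFn_spec {V : Set ℕ} (G : SimpleGraph V) (x : V) :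
    ∃ y : V, G.Reachable x y ∧ gFn G x = (y : ℕ) + G.dist x y := by
  have : gFn G x ∈ {n : ℕ | ∃ y : V, G.Reachable x y ∧ n = (y : ℕ) + G.dist x y} :=
    Nat.sInf_mem ⟨(x : ℕ) + G.dist x x, x, SimpleGraph.Reachable.refl x, rfl⟩
  exact this

lemma gFn_adj_le {V : Set ℕ} (G : SimpleGraph V) {x x' : V} (h : G.Adj x x') :
    gFn G x' ≤ gFn G x + 1 := by
  obtain ⟨y, hr, he⟩ := gFn_spec G x
  have hr' : G.Reachable x' y := (h.symm.reachable).trans hr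
  obtain ⟨p, hp⟩ := hr.exists_walk_length_eq_dist
  have hd : G.dist x' y ≤ G.dist x y + 1 := by
    have := SimpleGraph.dist_le (SimpleGraph.Walk.cons h.symm p)
    simpa [hp] using this
  have : gFn G x' ≤ (y : ℕ) + G.dist x' y :=
    Nat.sInf_le ⟨y, hr', rfl⟩
  omega

lemma ball_finite {V : Set ℕ} (G : SimpleGraph V) (hLF : G.LocallyFinite) :
    ∀ (n : ℕ) (y : V), {b : V | G.Reachable y b ∧ G.dist y b ≤ n}.Finite := by
  intro n
  induction n with
  | zero =>
    intro y
    apply Set.Finite.subset (Set.finite_singleton y)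
    rintro b ⟨hr, hd⟩
    simp only [Nat.le_zero] at hd
    exact ((hr.dist_eq_zero_iff).mp hd).symm
  | succ n ih =>
    intro y
    haveI : Fintype (G.neighborSet y) := hLF y
    have hN : (G.neighborSet y).Finite := (G.neighborSet y).toFinite
    apply Set.Finite.subset
      (Set.Finite.insert y (Set.Finite.biUnion hN
        (fun z _ => ih z)))
    rintro b ⟨hr, hd⟩
    by_cases hby : b = y
    · exact Or.inl hby
    · obtain ⟨p, hp⟩ := hr.exists_walk_length_eq_dist
      cases p with
      | nil => exact absurd rfl (Ne.symm hby)
      | cons h q =>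
        right
        refine Set.mem_biUnion h ?_
        refine ⟨q.reachable, ?_⟩
        have := SimpleGraph.dist_le q
        simp only [SimpleGraph.Walk.length_cons] at hp
        omega

/-- Let `U i = {x | gFn G x ≡ i (mod 2)}` for `i ∈ {0,1}`.  Then `gFn G` is constant
on every connected component of the induced subgraph `G[U i]`, and every such
component is finite. -/
theorem stmt_4 {V : Set ℕ} (G : SimpleGraph V) (hLF : G.LocallyFinite) (i : Fin 2) :
    (∀ a b : {x : V // gFn G x % 2 = (i : ℕ)},
      (G.induce {x : V | gFn G x % 2 = (i : ℕ)}).Reachable a b → gFn G a = gFn G b) ∧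
    (∀ a : {x : V // gFn G x % 2 = (i : ℕ)},
      {b : {x : V // gFn G x % 2 = (i : ℕ)} |
        (G.induce {x : V | gFn G x % 2 = (i : ℕ)}).Reachable a b}.Finite) := by
  have const : ∀ a b : {x : V // gFn G x % 2 = (i : ℕ)},
      (G.induce {x : V | gFn G x % 2 = (i : ℕ)}).Reachable a b → gFn G a = gFn G b := by
    intro a b hab
    obtain ⟨w⟩ := hab
    induction w with
    | nil => rfl
    | cons h q ih =>
      rename_i u v _
      have hadj : G.Adj u.1 v.1 := h
      have h1 := gFn_adj_le G hadj
      have h2 := gFn_adj_le G hadj.symm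
      have hu := u.2
      have hv := v.2
      have : gFn G u.1 = gFn G v.1 := by omega
      rw [this]; exact ih
  refine ⟨const, ?_⟩
  intro a
  set c := gFn G a.1 with hc
  -- every b in the component lies in a ball of radius c around some y ≤ c
  have hYfin : {y : V | (y : ℕ) ≤ c}.Finite := by
    have : {y : V | (y : ℕ) ≤ c} = Subtype.val ⁻¹' (Set.Iic c) := rfl
    rw [this]
    exact Set.Finite.preimage Subtype.val_injective.injOn (Set.finite_Iic c)
  have hBig : {v : V | ∃ y : V, (y : ℕ) ≤ c ∧ G.Reachable y v ∧ G.dist y v ≤ c}.Finite := by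
    have : {v : V | ∃ y : V, (y : ℕ) ≤ c ∧ G.Reachable y v ∧ G.dist y v ≤ c}
        ⊆ ⋃ y ∈ {y : V | (y : ℕ) ≤ c}, {b : V | G.Reachable y b ∧ G.dist y b ≤ c} := by
      rintro v ⟨y, hy, hr, hd⟩
      exact Set.mem_biUnion hy ⟨hr, hd⟩
    exact Set.Finite.subset (Set.Finite.biUnion hYfin fun y _ => ball_finite G hLF c y) this
  apply Set.Finite.subset (Set.Finite.preimage
    (f := (Subtype.val : {x : V // gFn G x % 2 = (i : ℕ)} → V))
    Subtype.val_injective.injOn hBig)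
  intro b hb
  have hgb : gFn G b.1 = c := (const a b hb).symm
  obtain ⟨y, hr, he⟩ := gFn_spec G b.1
  refine ⟨y, ?_, hr.symm, ?_⟩ <;> rw [hgb] at he
  · omega
  · rw [SimpleGraph.dist_comm]; omega
end

section
/- Let H be a graph obtained from a graph G by replacing each edge {x,y} of G with a path of odd length (i.e., subdividing each edge an even number of times, where the number of subdivision vertices may depend on the edge). If H has a perfect matching, then G has a perfect matching. -/
open SimpleGraph

variable {V : Type*}

/-- The relation generating the graph obtained from `G` by replacing each edge
`{x,y}` (with `x < y`) by a path through `2 * m x y` new internal vertices, i.e. a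
path of odd length `2 * m x y + 1`. -/
def subdivRel [LinearOrder V] (G : SimpleGraph V) (m : V → V → ℕ) :
    (V ⊕ V × V × ℕ) → (V ⊕ V × V × ℕ) → Prop
  | Sum.inl x, Sum.inl y => G.Adj x y ∧ x < y ∧ m x y = 0
  | Sum.inl x, Sum.inr (a, b, j) => G.Adj a b ∧ a < b ∧ 0 < m a b ∧
      ((x = a ∧ j = 0) ∨ (x = b ∧ j = 2 * m a b - 1))
  | Sum.inr (a, b, j), Sum.inr (a', b', j') =>
      a = a' ∧ b = b' ∧ G.Adj a b ∧ a < b ∧ j + 1 = j' ∧ j' < 2 * m a b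
  | Sum.inr _, Sum.inl _ => False

/-- The actual vertex set of the subdivided graph: all original vertices, together
with the internal vertices `(a, b, j)` for each edge `a < b` of `G` and
`j < 2 * m a b`. -/
def subdivVerts [LinearOrder V] (G : SimpleGraph V) (m : V → V → ℕ) :
    Set (V ⊕ V × V × ℕ) :=
  {w | match w with
    | Sum.inl _ => True
    | Sum.inr (a, b, j) => G.Adj a b ∧ a < b ∧ j < 2 * m a b}

/-- The graph `H` obtained from `G` by replacing each edge `{x,y}` by a path of odd
length `2 * m x y + 1` (with `2 * m x y` new internal vertices). -/
def subdivGraph [LinearOrder V] (G : SimpleGraph V) (m : V → V → ℕ) :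
    SimpleGraph (subdivVerts G m) :=
  (SimpleGraph.fromRel (subdivRel G m)).induce (subdivVerts G m)

section Aux
variable [LinearOrder V] {G : SimpleGraph V} {m : V → V → ℕ}

/-- Adjacency in the matching `M`, transported to raw vertices. -/
def stmt10A (M : (subdivGraph G m).Subgraph) (u w : V ⊕ V × V × ℕ) : Prop :=
  ∃ (hu : u ∈ subdivVerts G m) (hw : w ∈ subdivVerts G m), M.Adj ⟨u, hu⟩ ⟨w, hw⟩

variable {M : (subdivGraph G m).Subgraph}

lemma stmt10A_symm {u w} (h : stmt10A M u w) : stmt10A M w u := by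
  obtain ⟨hu, hw, h⟩ := h; exact ⟨hw, hu, h.symm⟩

lemma stmt10A_rel {u w} (h : stmt10A M u w) :
    subdivRel G m u w ∨ subdivRel G m w u := by
  obtain ⟨hu, hw, h⟩ := h
  exact h.adj_sub.2

lemma stmt10A_uniq (hM : M.IsPerfectMatching) {u w w'}
    (h : stmt10A M u w) (h' : stmt10A M u w') : w = w' := by
  obtain ⟨hu, hw, h⟩ := h
  obtain ⟨hu', hw', h'⟩ := h'
  have e : (⟨u, hu'⟩ : subdivVerts G m) = ⟨u, hu⟩ := rfl
  rw [e] at h'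
  have := (hM.1 (hM.2 ⟨u, hu⟩)).unique h h'
  exact congrArg Subtype.val this

lemma stmt10A_exists (hM : M.IsPerfectMatching) (u) (hu : u ∈ subdivVerts G m) :
    ∃ w, stmt10A M u w := by
  obtain ⟨w, hw, -⟩ := hM.1 (hM.2 ⟨u, hu⟩)
  exact ⟨w.1, hu, w.2, hw⟩

/-- Neighbor characterization for internal vertices. -/
lemma stmt10_nbr {a b : V} {j : ℕ} {w}
    (h : stmt10A M (Sum.inr (a, b, j)) w) :
    (j + 1 < 2 * m a b ∧ w = Sum.inr (a, b, j + 1)) ∨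
    (∃ k, k + 1 = j ∧ w = Sum.inr (a, b, k)) ∨
    (j = 0 ∧ w = Sum.inl a) ∨
    (j = 2 * m a b - 1 ∧ w = Sum.inl b) := by
  rcases stmt10A_rel h with hr | hr
  · cases w with
    | inl x => exact hr.elim
    | inr p =>
      obtain ⟨a', b', j'⟩ := p
      obtain ⟨rfl, rfl, -, -, rfl, h6⟩ := hr
      exact Or.inl ⟨h6, rfl⟩
  · cases w with
    | inl x =>
      obtain ⟨h1, h2, h3, h4⟩ := hr
      rcases h4 with ⟨rfl, rfl⟩ | ⟨rfl, rfl⟩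
      · exact Or.inr (Or.inr (Or.inl ⟨rfl, rfl⟩))
      · exact Or.inr (Or.inr (Or.inr ⟨rfl, rfl⟩))
    | inr p =>
      obtain ⟨a', b', j'⟩ := p
      obtain ⟨rfl, rfl, -, -, h5, h6⟩ := hr
      exact Or.inr (Or.inl ⟨j', h5, rfl⟩)

/-- previous vertex on the path -/
def stmt10prev (a b : V) : ℕ → V ⊕ V × V × ℕ
  | 0 => Sum.inl a
  | k + 1 => Sum.inr (a, b, k)

lemma stmt10_key (hM : M.IsPerfectMatching) {a b : V} (hab : G.Adj a b)
    (hlt : a < b) :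
    ∀ j, j < 2 * m a b →
      (stmt10A M (Sum.inr (a, b, j)) (stmt10prev a b j) ↔
        (Even j ↔ stmt10A M (Sum.inr (a, b, 0)) (Sum.inl a))) := by
  intro j
  induction j with
  | zero => simp [stmt10prev]
  | succ j ih =>
    intro hj
    have hj' : j < 2 * m a b := by omega
    have step : stmt10A M (Sum.inr (a, b, j + 1)) (Sum.inr (a, b, j)) ↔
        ¬ stmt10A M (Sum.inr (a, b, j)) (stmt10prev a b j) := by
      constructor
      · intro h hcon
        have e := stmt10A_uniq hM (stmt10A_symm h) hcon
        cases j with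
        | zero => simp [stmt10prev] at e
        | succ k => simp [stmt10prev] at e; omega
      · intro hcon
        obtain ⟨w, hw⟩ := stmt10A_exists hM (Sum.inr (a, b, j)) ⟨hab, hlt, hj'⟩
        rcases stmt10_nbr hw with ⟨h1, rfl⟩ | ⟨k, hk, rfl⟩ | ⟨rfl, rfl⟩ | ⟨h1, rfl⟩
        · exact stmt10A_symm hw
        · subst hk; exact absurd hw hcon
        · exact absurd hw hcon
        · omega
    rw [show stmt10prev a b (j + 1) = Sum.inr (a, b, j) from rfl, step, ih hj',
      Nat.even_add_one]
    tauto

/-- The parity lemma: the endpoint `a` is matched into the path of edge `{a,b}`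
iff the endpoint `b` is. -/
lemma stmt10_parity (hM : M.IsPerfectMatching) {a b : V} (hab : G.Adj a b)
    (hlt : a < b) (hm : 0 < m a b) :
    (stmt10A M (Sum.inl a) (Sum.inr (a, b, 0)) ↔
      stmt10A M (Sum.inl b) (Sum.inr (a, b, 2 * m a b - 1))) := by
  set n := 2 * m a b with hn
  have hn2 : 2 ≤ n := by omega
  have hlast : n - 1 < n := by omega
  have hprev : stmt10prev a b (n - 1) = Sum.inr (a, b, n - 2) := by
    rw [show n - 1 = (n - 2) + 1 by omega]; rfl
  have stepb : stmt10A M (Sum.inl b) (Sum.inr (a, b, n - 1)) ↔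
      ¬ stmt10A M (Sum.inr (a, b, n - 1)) (stmt10prev a b (n - 1)) := by
    constructor
    · intro h hcon
      have e := stmt10A_uniq hM (stmt10A_symm h) hcon
      rw [hprev] at e
      simp at e
    · intro hcon
      obtain ⟨w, hw⟩ := stmt10A_exists hM (Sum.inr (a, b, n - 1)) ⟨hab, hlt, hlast⟩
      rcases stmt10_nbr hw with ⟨h1, rfl⟩ | ⟨k, hk, rfl⟩ | ⟨h1, rfl⟩ | ⟨h1, rfl⟩
      · omega
      · exfalso; apply hcon
        rw [hprev, show n - 2 = k by omega]
        exact hw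
      · omega
      · exact stmt10A_symm hw
  have hkey := stmt10_key hM hab hlt (n - 1) hlast
  have hodd : ¬ Even (n - 1) := by
    intro he; obtain ⟨k, hk⟩ := he; omega
  have hsymm : stmt10A M (Sum.inl a) (Sum.inr (a, b, 0)) ↔
      stmt10A M (Sum.inr (a, b, 0)) (Sum.inl a) :=
    ⟨stmt10A_symm, stmt10A_symm⟩
  rw [stepb, hkey, hsymm]
  tauto

/-- `x` is matched into the path replacing the edge `{x, y}`. -/
def stmt10F (M : (subdivGraph G m).Subgraph) (x y : V) : Prop :=
  stmt10A M (Sum.inl x) (Sum.inl y) ∨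
  (∃ j, stmt10A M (Sum.inl x) (Sum.inr (x, y, j))) ∨
  (∃ j, stmt10A M (Sum.inl x) (Sum.inr (y, x, j)))

lemma stmt10F_adj {x y : V} (h : stmt10F M x y) : G.Adj x y := by
  rcases h with h | ⟨j, h⟩ | ⟨j, h⟩
  · rcases stmt10A_rel h with ⟨h1, -⟩ | ⟨h1, -⟩
    · exact h1
    · exact h1.symm
  · rcases stmt10A_rel h with ⟨h1, -⟩ | hr
    · exact h1
    · exact hr.elim
  · rcases stmt10A_rel h with ⟨h1, -⟩ | hr
    · exact h1.symm
    · exact hr.elim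

lemma stmt10F_symm (hM : M.IsPerfectMatching) {x y : V} (h : stmt10F M x y) :
    stmt10F M y x := by
  rcases h with h | ⟨j, h⟩ | ⟨j, h⟩
  · exact Or.inl (stmt10A_symm h)
  · -- x is matched to an internal vertex of the path (x, y, ·); so x < y
    have hr := stmt10A_rel h
    rcases hr with hr | hr
    · obtain ⟨h1, h2, h3, h4⟩ := hr
      have hj0 : j = 0 := by
        rcases h4 with ⟨-, hj⟩ | ⟨hxy, -⟩
        · exact hj
        · exact absurd hxy h2.ne
      subst hj0
      have := (stmt10_parity hM h1 h2 h3).mp h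
      exact Or.inr (Or.inr ⟨2 * m x y - 1, this⟩)
    · exact hr.elim
  · have hr := stmt10A_rel h
    rcases hr with hr | hr
    · obtain ⟨h1, h2, h3, h4⟩ := hr
      have hj0 : j = 2 * m y x - 1 := by
        rcases h4 with ⟨hxy, -⟩ | ⟨-, hj⟩
        · exact absurd hxy.symm h2.ne
        · exact hj
      subst hj0
      have := (stmt10_parity hM h1 h2 h3).mpr h
      exact Or.inr (Or.inl ⟨0, this⟩)
    · exact hr.elim

lemma stmt10F_exists (hM : M.IsPerfectMatching) (x : V) : ∃ y, stmt10F M x y := by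
  obtain ⟨w, hw⟩ := stmt10A_exists hM (Sum.inl x) trivial
  cases w with
  | inl y => exact ⟨y, Or.inl hw⟩
  | inr p =>
    obtain ⟨a, b, j⟩ := p
    rcases stmt10A_rel hw with hr | hr
    · obtain ⟨h1, h2, h3, h4⟩ := hr
      rcases h4 with ⟨rfl, -⟩ | ⟨rfl, -⟩
      · exact ⟨b, Or.inr (Or.inl ⟨j, hw⟩)⟩
      · exact ⟨a, Or.inr (Or.inr ⟨j, hw⟩)⟩
    · exact hr.elim

lemma stmt10F_uniq (hM : M.IsPerfectMatching) {x y y' : V}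
    (h : stmt10F M x y) (h' : stmt10F M x y') : y = y' := by
  rcases h with h | ⟨j, h⟩ | ⟨j, h⟩ <;> rcases h' with h' | ⟨j', h'⟩ | ⟨j', h'⟩ <;>
    have e := stmt10A_uniq hM h h' <;> simp_all

end Aux


/-- If the graph `H` obtained from `G` by replacing each edge by a path of odd length
has a perfect matching, then `G` has a perfect matching. -/
theorem stmt_10 [LinearOrder V] (G : SimpleGraph V) (m : V → V → ℕ)
    (hPM : ∃ M : (subdivGraph G m).Subgraph, M.IsPerfectMatching) :
    ∃ M : G.Subgraph, M.IsPerfectMatching := by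
  obtain ⟨M, hM⟩ := hPM
  refine ⟨{ verts := Set.univ
            Adj := stmt10F M
            adj_sub := fun h => stmt10F_adj h
            edge_vert := fun _ => trivial
            symm := ⟨fun x y h => stmt10F_symm hM h⟩ }, ?_, fun v => trivial⟩
  intro v _
  obtain ⟨y, hy⟩ := stmt10F_exists hM v
  exact ⟨y, hy, fun y' hy' => stmt10F_uniq hM hy' hy⟩
end

section
/- Let G be a locally finite acyclic graph in which every vertex has degree at least 2, and suppose G contains no infinite injective path on which every other vertex has degree 2. Then for every vertex x there exists a finite matching M of G such that x is covered by M and, letting E be the set of vertices covered by M, every vertex of the induced subgraph G[V(G) \ E] still has degree at least 2 in that subgraph. -/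
open SimpleGraph

namespace Stmt13Aux


variable {V : Type*} {G : SimpleGraph V}

/-- There is a walk from `a` to `v` avoiding the vertex `x`. -/
def Avoid (G : SimpleGraph V) (x a v : V) : Prop :=
  ∃ p : G.Walk a v, x ∉ p.support

theorem Avoid.ne_end {x a v : V} (h : Avoid G x a v) : x ≠ v := by
  obtain ⟨p, hp⟩ := h
  exact fun hx => hp (hx ▸ p.end_mem_support)

theorem Avoid.ne_start {x a v : V} (h : Avoid G x a v) : x ≠ a := by
  obtain ⟨p, hp⟩ := h
  exact fun hx => hp (hx ▸ p.start_mem_support)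

theorem avoid_refl {x a : V} (h : x ≠ a) : Avoid G x a a :=
  ⟨Walk.nil, by simpa using h⟩

theorem Avoid.symm {x a v : V} (h : Avoid G x a v) : Avoid G x v a := by
  obtain ⟨p, hp⟩ := h
  exact ⟨p.reverse, by simpa using hp⟩

theorem Avoid.cons {x a b v : V} (hab : G.Adj a b) (hxa : x ≠ a)
    (h : Avoid G x b v) : Avoid G x a v := by
  obtain ⟨p, hp⟩ := h
  refine ⟨Walk.cons hab p, ?_⟩
  simp only [Walk.support_cons, List.mem_cons]
  rintro (rfl | hx) <;> [exact hxa rfl; exact hp hx]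

theorem Avoid.trans {x a b v : V} (h1 : Avoid G x a b) (h2 : Avoid G x b v) :
    Avoid G x a v := by
  obtain ⟨p, hp⟩ := h1
  obtain ⟨q, hq⟩ := h2
  refine ⟨p.append q, ?_⟩
  rw [Walk.mem_support_append_iff]
  rintro (h | h) <;> [exact hp h; exact hq h]

theorem avoid_of_mem_support {x a v b : V} (p : G.Walk a v) (hp : x ∉ p.support)
    (hb : b ∈ p.support) : Avoid G x a b := by
  classical
  exact ⟨p.takeUntil b hb, fun hx => hp (p.support_takeUntil_subset hb hx)⟩

/-- In an acyclic graph, if `a — x — b` is a path then there is no walk from `a`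
to `b` avoiding `x`. -/
theorem not_avoid_of_adj_adj (hA : G.IsAcyclic) {a x b : V} (hax : G.Adj a x)
    (hxb : G.Adj x b) (hab : a ≠ b) : ¬ Avoid G x a b := by
  classical
  rintro ⟨p, hp⟩
  have hP : p.bypass.IsPath := p.bypass_isPath
  have hxP : x ∉ p.bypass.support := fun h => hp (p.support_bypass_subset h)
  have hQ : (Walk.cons hax (Walk.cons hxb Walk.nil)).IsPath := by
    simp [Walk.cons_isPath_iff, hab, hax.ne, hxb.ne]
  have := hA.path_unique ⟨p.bypass, hP⟩ ⟨_, hQ⟩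
  apply hxP
  have : p.bypass = Walk.cons hax (Walk.cons hxb Walk.nil) := congrArg Subtype.val this
  rw [this]
  simp

/-- In an acyclic graph, for adjacent `a, b` no vertex can be reached both from
`a` avoiding `b` and from `b` avoiding `a`. -/
theorem not_avoid_avoid (hA : G.IsAcyclic) {a b v : V} (hab : G.Adj a b)
    (h1 : Avoid G b a v) (h2 : Avoid G a b v) : False := by
  classical
  obtain ⟨p, hp⟩ := h1
  obtain ⟨q, hq⟩ := h2
  have hP : p.bypass.IsPath := p.bypass_isPath
  have hbP : b ∉ p.bypass.support := fun h => hp (p.support_bypass_subset h)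
  have hQ : (Walk.cons hab q.bypass).IsPath := by
    rw [Walk.cons_isPath_iff]
    exact ⟨q.bypass_isPath, fun h => hq (q.support_bypass_subset h)⟩
  have := hA.path_unique ⟨p.bypass, hP⟩ ⟨_, hQ⟩
  apply hbP
  have heq : p.bypass = Walk.cons hab q.bypass := congrArg Subtype.val this
  rw [heq]
  simp

theorem no_triangle (hA : G.IsAcyclic) {a b c : V} (hab : G.Adj a b)
    (hbc : G.Adj b c) (hac : G.Adj a c) : False := by
  refine not_avoid_of_adj_adj hA hab hbc hac.ne ⟨Walk.cons hac Walk.nil, ?_⟩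
  simp [hab.ne', hbc.ne]

theorem two_neighbors {t w : V} (h2 : (G.neighborSet t).ncard = 2)
    (hw : G.Adj t w) : ∃ s, s ≠ w ∧ G.Adj t s ∧ G.neighborSet t = {w, s} := by
  obtain ⟨a, b, hab, hset⟩ := Set.ncard_eq_two.mp h2
  have hwm : w ∈ G.neighborSet t := hw
  rw [hset] at hwm
  rcases hwm with rfl | rfl
  · exact ⟨b, hab.symm, by rw [← SimpleGraph.mem_neighborSet, hset]; simp, hset⟩
  · refine ⟨a, hab, by rw [← SimpleGraph.mem_neighborSet, hset]; simp, ?_⟩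
    rw [hset, Set.pair_comm]


variable {V : Type*} {G : SimpleGraph V}

def natWalk (g : ℕ → V) (hadj : ∀ n, G.Adj (g n) (g (n + 1))) :
    (n k : ℕ) → G.Walk (g n) (g (n + k))
  | _, 0 => Walk.nil
  | n, (k + 1) => (natWalk g hadj n k).concat (hadj (n + k))

theorem natWalk_length (g : ℕ → V) (hadj : ∀ n, G.Adj (g n) (g (n + 1)))
    (n k : ℕ) : (natWalk g hadj n k).length = k := by
  induction k with
  | zero => rfl
  | succ k ih => simp [natWalk, Walk.length_concat, ih]

theorem natWalk_mem_support (g : ℕ → V) (hadj : ∀ n, G.Adj (g n) (g (n + 1)))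
    {n k : ℕ} {u : V} (hu : u ∈ (natWalk g hadj n k).support) :
    ∃ j ≤ k, u = g (n + j) := by
  induction k with
  | zero =>
    simp only [natWalk, Walk.support_nil, List.mem_singleton] at hu
    exact ⟨0, le_rfl, hu⟩
  | succ k ih =>
    simp only [natWalk, Walk.support_concat, List.concat_eq_append,
      List.mem_append, List.mem_singleton] at hu
    rcases hu with hu | hu
    · obtain ⟨j, hj, hju⟩ := ih hu
      exact ⟨j, Nat.le_succ_of_le hj, hju⟩
    · exact ⟨k + 1, le_rfl, hu⟩

theorem natWalk_isPath (hA : G.IsAcyclic) (g : ℕ → V)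
    (hadj : ∀ n, G.Adj (g n) (g (n + 1))) (hnb : ∀ n, g (n + 2) ≠ g n) :
    ∀ k n, (natWalk g hadj n k).IsPath := by
  intro k
  induction k using Nat.strong_induction_on with
  | _ k IH =>
    match k with
    | 0 => intro n; exact Walk.IsPath.nil
    | (k + 1) =>
      intro n
      have hp : (natWalk g hadj n k).IsPath := IH k (Nat.lt_succ_self k) n
      have hns : g (n + k + 1) ∉ (natWalk g hadj n k).support := by
        intro hmem
        obtain ⟨j, hj, hju⟩ := natWalk_mem_support g hadj hmem
        rcases eq_or_lt_of_le hj with rfl | hjk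
        · have h := hadj (n + j); rw [hju] at h; exact G.irrefl h
        · -- two paths between g (n+j) and g (n+k)
          have hadj' : G.Adj (g (n + j)) (g (n + k)) := by
            have h := hadj (n + k); rw [hju] at h; exact h.symm
          have e : n + j + (k - j) = n + k := by omega
          have hP1 : ((natWalk g hadj (n + j) (k - j)).copy rfl
              (congrArg g e)).IsPath := by
            rw [Walk.isPath_copy]
            exact IH (k - j) (by omega) (n + j)
          have := hA.path_unique ⟨_, hP1⟩ (Path.singleton hadj')
          have hlen : k - j = 1 := by
            have := congrArg (fun q : G.Path (g (n+j)) (g (n+k)) =>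
              (q : G.Walk (g (n+j)) (g (n+k))).length) this
            simpa [Walk.length_copy, natWalk_length, Path.singleton] using this
          have : g (n + k - 1 + 2) ≠ g (n + k - 1) := hnb (n + k - 1)
          apply this
          rw [show n + k - 1 + 2 = n + k + 1 by omega, hju,
            show n + k - 1 = n + j by omega]
      rw [Walk.isPath_def]
      show ((natWalk g hadj n k).concat (hadj (n + k))).support.Nodup
      rw [Walk.support_concat, List.nodup_append']
      refine ⟨(Walk.isPath_def _).mp hp, List.nodup_singleton _, ?_⟩
      intro a ha hb
      simp only [List.mem_singleton] at hb
      exact hns (hb ▸ ha)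

theorem natWalk_injective (hA : G.IsAcyclic) (g : ℕ → V)
    (hadj : ∀ n, G.Adj (g n) (g (n + 1))) (hnb : ∀ n, g (n + 2) ≠ g n) :
    Function.Injective g := by
  have key : ∀ i j : ℕ, i < j → g i ≠ g j := by
    intro i j hij heq
    have hp : (natWalk g hadj i (j - i)).IsPath := natWalk_isPath hA g hadj hnb _ i
    have hcast : g (i + (j - i)) = g i := by rw [show i + (j-i) = j by omega]; exact heq.symm
    have hp' : ((natWalk g hadj i (j - i)).copy rfl hcast).IsPath := by
      rw [Walk.isPath_copy]; exact hp
    have := Walk.isPath_iff_eq_nil.mp hp'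
    have hlen := congrArg Walk.length this
    rw [Walk.length_copy, natWalk_length] at hlen
    simp only [Walk.length_nil] at hlen
    omega
  intro i j heq
  by_contra hne
  rcases lt_or_gt_of_ne hne with h | h
  · exact key i j h heq
  · exact key j i h heq.symm




/-- `Good z w M`: `M` is a finite matching containing the edge `z–w`-ish cluster
hanging off `z` on the `w` side. -/
def Good (G : SimpleGraph V) (z w : V) (M : G.Subgraph) : Prop :=
  M.IsMatching ∧ M.verts.Finite ∧ z ∈ M.verts ∧ w ∈ M.verts ∧
  (∀ v ∈ M.verts, v = z ∨ Avoid G z w v) ∧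
  (∀ y ∉ M.verts, (G.neighborSet y ∩ M.verts).ncard ≤ 1) ∧
  (∀ y ∉ M.verts, ¬ G.Adj z y → (G.neighborSet y ∩ M.verts).Nonempty →
    3 ≤ (G.neighborSet y).ncard)


theorem branches (hA : G.IsAcyclic) (hLF : G.LocallyFinite)
    {c d : V} (hcd : G.Adj c d)
    (hrec : ∀ t s : V, G.Adj c t → t ≠ d → (G.neighborSet t).ncard = 2 →
      G.Adj t s → s ≠ c → ∃ M, Good G t s M) :
    ∃ N : G.Subgraph, N.IsMatching ∧ N.verts.Finite ∧
      (∀ v ∈ N.verts, ∃ t, G.Adj c t ∧ t ≠ d ∧ t ∈ N.verts ∧ Avoid G c t v) ∧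
      (∀ t, G.Adj c t → t ≠ d → (G.neighborSet t).ncard = 2 → t ∈ N.verts) ∧
      (∀ y ∉ N.verts, G.Adj y c → G.neighborSet y ∩ N.verts = ∅) ∧
      (∀ y ∉ N.verts, y ≠ c → ¬ G.Adj y c →
        (G.neighborSet y ∩ N.verts).ncard ≤ 1 ∧
        ((G.neighborSet y ∩ N.verts).Nonempty → 3 ≤ (G.neighborSet y).ncard)) := by
  classical
  set T : Set V := {t | G.Adj c t ∧ t ≠ d ∧ (G.neighborSet t).ncard = 2} with hT
  have hTsub : T ⊆ G.neighborSet c := fun t ht => ht.1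
  have hTfin : T.Finite := by
    have : (G.neighborSet c).Finite := by
      letI := hLF c; exact (G.neighborSet c).toFinite
    exact this.subset hTsub
  have hsel : ∀ t : ↥T, ∃ s, s ≠ c ∧ G.Adj t.1 s ∧ G.neighborSet t.1 = {c, s} :=
    fun t => two_neighbors t.2.2.2 t.2.1.symm
  choose s hs1 hs2 hs3 using hsel
  have hMex : ∀ t : ↥T, ∃ M, Good G t.1 (s t) M :=
    fun t => hrec t.1 (s t) t.2.1 t.2.2.1 t.2.2.2 (hs2 t) (hs1 t)
  choose M hM using hMex
  -- basic per-branch facts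
  have fact1 : ∀ (t : ↥T), ∀ v ∈ (M t).verts, Avoid G c t.1 v := by
    intro t v hv
    rcases (hM t).2.2.2.2.1 v hv with rfl | h
    · exact avoid_refl t.2.1.ne
    · obtain ⟨p, hp⟩ := h
      have hc : c ∉ p.support := fun hc =>
        not_avoid_of_adj_adj hA (hs2 t).symm t.2.1.symm (hs1 t)
          (avoid_of_mem_support p hp hc)
      exact Avoid.cons (hs2 t) t.2.1.ne ⟨p, hc⟩
  have fact2c : ∀ (t : ↥T), ∀ v ∈ (M t).verts, v ≠ c :=
    fun t v hv => fun h => (fact1 t v hv).ne_end (h ▸ rfl)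
  have fact2d : ∀ (t : ↥T), ∀ v ∈ (M t).verts, v ≠ d := by
    rintro t v hv rfl
    exact not_avoid_of_adj_adj hA t.2.1.symm hcd t.2.2.1 (fact1 t v hv)
  have fact3 : ∀ (t t' : ↥T), t.1 ≠ t'.1 → ∀ v, Avoid G c t.1 v →
      Avoid G c t'.1 v → False := by
    intro t t' hne v h1 h2
    exact not_avoid_of_adj_adj hA t.2.1.symm t'.2.1 hne (h1.trans h2.symm)
  have fact4 : ∀ (t : ↥T), ∀ y b, y ≠ c → G.Adj y b → b ∈ (M t).verts →
      Avoid G c t.1 y := by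
    intro t y b hyc hyb hb
    refine (fact1 t b hb).trans ⟨Walk.cons hyb.symm Walk.nil, ?_⟩
    intro h
    simp only [Walk.support_cons, Walk.support_nil, List.mem_cons,
      List.mem_singleton, List.not_mem_nil, or_false] at h
    rcases h with h | h
    · exact fact2c t b hb h.symm
    · exact hyc h.symm
  have hvmem : ∀ v, v ∈ (⨆ t : ↥T, M t).verts ↔ ∃ t : ↥T, v ∈ (M t).verts := by
    intro v
    rw [Subgraph.verts_iSup, Set.mem_iUnion]
  refine ⟨⨆ t : ↥T, M t, ?_, ?_, ?_, ?_, ?_, ?_⟩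
  · refine Subgraph.IsMatching.iSup (fun t => (hM t).1) ?_
    intro t t' hne
    rw [(hM t).1.support_eq_verts, (hM t').1.support_eq_verts, Set.disjoint_left]
    intro v hv hv'
    exact fact3 t t' (fun h => hne (Subtype.ext h)) v (fact1 t v hv) (fact1 t' v hv')
  · rw [Subgraph.verts_iSup]
    haveI : Finite ↥T := hTfin.to_subtype
    exact Set.finite_iUnion fun t => (hM t).2.1
  · intro v hv
    obtain ⟨t, ht⟩ := (hvmem v).mp hv
    exact ⟨t.1, t.2.1, t.2.2.1, (hvmem t.1).mpr ⟨t, (hM t).2.2.1⟩, fact1 t v ht⟩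
  · intro t hct htd ht2
    exact (hvmem t).mpr ⟨⟨t, hct, htd, ht2⟩, (hM ⟨t, hct, htd, ht2⟩).2.2.1⟩
  · intro y hy hyc
    rw [Set.eq_empty_iff_forall_notMem]
    rintro b ⟨hb1, hb2⟩
    obtain ⟨t, hbt⟩ := (hvmem b).mp hb2
    have hAv : Avoid G c t.1 y := fact4 t y b hyc.ne hb1 hbt
    have htmem : t.1 ∈ (⨆ t : ↥T, M t).verts := (hvmem t.1).mpr ⟨t, (hM t).2.2.1⟩
    exact not_avoid_of_adj_adj hA t.2.1.symm hyc.symm (fun h => hy (h ▸ htmem)) hAv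
  · intro y hy hyc hyadj
    by_cases hne : (G.neighborSet y ∩ (⨆ t : ↥T, M t).verts).Nonempty
    swap
    · rw [Set.not_nonempty_iff_eq_empty] at hne
      rw [hne]
      simp
    obtain ⟨b0, hb01, hb02⟩ := hne
    obtain ⟨t0, hb0t⟩ := (hvmem b0).mp hb02
    have hsub : G.neighborSet y ∩ (⨆ t : ↥T, M t).verts
        ⊆ G.neighborSet y ∩ (M t0).verts := by
      rintro b ⟨hb1, hb2⟩
      obtain ⟨t, hbt⟩ := (hvmem b).mp hb2
      by_cases h : t.1 = t0.1
      · exact ⟨hb1, (Subtype.ext h : t = t0) ▸ hbt⟩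
      · exact (fact3 t t0 h y (fact4 t y b hyc hb1 hbt)
          (fact4 t0 y b0 hyc hb01 hb0t)).elim
    have hyM : y ∉ (M t0).verts := fun h => hy ((hvmem y).mpr ⟨t0, h⟩)
    constructor
    · calc (G.neighborSet y ∩ (⨆ t : ↥T, M t).verts).ncard
          ≤ (G.neighborSet y ∩ (M t0).verts).ncard :=
            Set.ncard_le_ncard hsub ((hM t0).2.1.subset Set.inter_subset_right)
      _ ≤ 1 := (hM t0).2.2.2.2.2.1 y hyM
    · intro _
      have hnadj : ¬ G.Adj t0.1 y := by
        intro h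
        have hmem : y ∈ G.neighborSet t0.1 := h
        rw [hs3 t0] at hmem
        rcases hmem with rfl | rfl
        · exact hyc rfl
        · exact hyM (hM t0).2.2.2.1
      exact (hM t0).2.2.2.2.2.2 y hyM hnadj ⟨b0, hb01, hb0t⟩

theorem aux_path4 (hA : G.IsAcyclic) {a b c d : V} (hab : G.Adj a b)
    (hbc : G.Adj b c) (hcd : G.Adj c d) (hac : a ≠ c) (had : a ≠ d)
    (hbd : b ≠ d) (hav : Avoid G b a d) : False := by
  classical
  obtain ⟨p, hp⟩ := hav
  have hP : p.bypass.IsPath := p.bypass_isPath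
  have hbP : b ∉ p.bypass.support := fun h => hp (p.support_bypass_subset h)
  have hQ : (Walk.cons hab (Walk.cons hbc (Walk.cons hcd Walk.nil))).IsPath := by
    simp [Walk.cons_isPath_iff, hab.ne, hbc.ne, hcd.ne, hac, had, hbd]
  have := hA.path_unique ⟨p.bypass, hP⟩ ⟨_, hQ⟩
  apply hbP
  have heq : p.bypass = Walk.cons hab (Walk.cons hbc (Walk.cons hcd Walk.nil)) :=
    congrArg Subtype.val this
  rw [heq]
  simp

theorem step (hA : G.IsAcyclic) (hLF : G.LocallyFinite)
    (hMinDeg : ∀ v : V, 2 ≤ (G.neighborSet v).ncard)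
    {z w : V} (hzw : G.Adj z w) (h2 : (G.neighborSet z).ncard = 2)
    (hrec : ∀ t s : V, G.Adj w t → t ≠ z → (G.neighborSet t).ncard = 2 →
      G.Adj t s → s ≠ w → ∃ M, Good G t s M) :
    ∃ M, Good G z w M := by
  classical
  obtain ⟨N, hNm, hNfin, hNiii, hNv, hNvi', hNvi⟩ := branches hA hLF hzw.symm hrec
  have hzN : z ∉ N.verts := by
    intro h
    obtain ⟨t, htw, htz, _, hAv⟩ := hNiii z h
    exact not_avoid_of_adj_adj hA htw.symm hzw.symm htz hAv
  have hwN : w ∉ N.verts := by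
    intro h
    obtain ⟨t, htw, htz, _, hAv⟩ := hNiii w h
    exact hAv.ne_end rfl
  set M : G.Subgraph := G.subgraphOfAdj hzw ⊔ N with hMdef
  have hMverts : M.verts = {z, w} ∪ N.verts := by
    rw [hMdef, Subgraph.verts_sup, subgraphOfAdj_verts]
  have hmm : ∀ v, v ∈ M.verts ↔ (v = z ∨ v = w ∨ v ∈ N.verts) := by
    intro v; rw [hMverts]; simp [Set.mem_insert_iff, or_assoc]
  have key : ∀ y, y ∉ M.verts → (G.neighborSet y ∩ M.verts).ncard ≤ 1 ∧
      (¬ G.Adj z y → (G.neighborSet y ∩ M.verts).Nonempty →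
        3 ≤ (G.neighborSet y).ncard) := by
    intro y hy
    have hyz : y ≠ z := fun h => hy ((hmm y).mpr (Or.inl h))
    have hyw : y ≠ w := fun h => hy ((hmm y).mpr (Or.inr (Or.inl h)))
    have hyN : y ∉ N.verts := fun h => hy ((hmm y).mpr (Or.inr (Or.inr h)))
    by_cases hadjz : G.Adj y z
    · have hclaim : G.neighborSet y ∩ M.verts = {z} := by
        apply Set.eq_singleton_iff_unique_mem.mpr
        refine ⟨⟨hadjz, (hmm z).mpr (Or.inl rfl)⟩, ?_⟩
        rintro b ⟨hb1, hb2⟩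
        rcases (hmm b).mp hb2 with rfl | rfl | hbN
        · rfl
        · exact (no_triangle hA hzw (hb1 : G.Adj y b).symm hadjz.symm).elim
        · obtain ⟨t, htw, htz, htN, hAv⟩ := hNiii b hbN
          have hAy : Avoid G w t y := by
            refine hAv.trans ⟨Walk.cons (hb1 : G.Adj y b).symm Walk.nil, ?_⟩
            intro hmem
            simp only [Walk.support_cons, Walk.support_nil, List.mem_cons,
              List.mem_singleton, List.not_mem_nil, or_false] at hmem
            rcases hmem with h | h
            · exact hwN (h ▸ hbN)
            · exact hyw h.symm
          exact (aux_path4 hA htw.symm hzw.symm hadjz.symm htz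
            (fun h => hyN (h ▸ htN)) hyw.symm hAy).elim
      refine ⟨by rw [hclaim]; simp, fun hna _ => absurd hadjz.symm hna⟩
    · by_cases hadjw : G.Adj y w
      · have hclaim : G.neighborSet y ∩ M.verts = {w} := by
          apply Set.eq_singleton_iff_unique_mem.mpr
          refine ⟨⟨hadjw, (hmm w).mpr (Or.inr (Or.inl rfl))⟩, ?_⟩
          rintro b ⟨hb1, hb2⟩
          rcases (hmm b).mp hb2 with rfl | rfl | hbN
          · exact absurd hb1 hadjz
          · rfl
          · have hempty := hNvi' y hyN hadjw
            exact (Set.eq_empty_iff_forall_notMem.mp hempty b ⟨hb1, hbN⟩).elim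
        refine ⟨by rw [hclaim]; simp, fun _ _ => ?_⟩
        have hne2 : (G.neighborSet y).ncard ≠ 2 :=
          fun hdeg => hyN (hNv y hadjw.symm hyz hdeg)
        have := hMinDeg y
        omega
      · have hclaim : G.neighborSet y ∩ M.verts = G.neighborSet y ∩ N.verts := by
          ext b
          constructor
          · rintro ⟨hb1, hb2⟩
            rcases (hmm b).mp hb2 with rfl | rfl | hbN
            · exact absurd hb1 hadjz
            · exact absurd hb1 hadjw
            · exact ⟨hb1, hbN⟩
          · rintro ⟨hb1, hbN⟩
            exact ⟨hb1, (hmm b).mpr (Or.inr (Or.inr hbN))⟩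
        obtain ⟨hc1, hc2⟩ := hNvi y hyN hyw hadjw
        rw [hclaim]
        exact ⟨hc1, fun _ hne => hc2 hne⟩
  refine ⟨M, ?_, ?_, ?_, ?_, ?_, fun y hy => (key y hy).1,
    fun y hy hna hne => (key y hy).2 hna hne⟩
  · refine (Subgraph.IsMatching.subgraphOfAdj hzw).sup hNm ?_
    rw [(Subgraph.IsMatching.subgraphOfAdj hzw).support_eq_verts,
      hNm.support_eq_verts, subgraphOfAdj_verts, Set.disjoint_left]
    rintro v (rfl | rfl)
    · exact hzN
    · exact hwN
  · rw [hMverts]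
    exact (Set.finite_singleton _ |>.insert _).union hNfin
  · exact (hmm z).mpr (Or.inl rfl)
  · exact (hmm w).mpr (Or.inr (Or.inl rfl))
  · intro v hv
    rcases (hmm v).mp hv with rfl | rfl | hvN
    · exact Or.inl rfl
    · exact Or.inr (avoid_refl hzw.ne)
    · refine Or.inr ?_
      obtain ⟨t, htw, htz, _, p, hp⟩ := hNiii v hvN
      have hzp : z ∉ p.support := fun hzp =>
        not_avoid_of_adj_adj hA htw.symm hzw.symm htz (avoid_of_mem_support p hp hzp)
      exact Avoid.cons htw hzw.ne ⟨p, hzp⟩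

theorem allGood (hA : G.IsAcyclic) (hLF : G.LocallyFinite)
    (hMinDeg : ∀ v : V, 2 ≤ (G.neighborSet v).ncard)
    (hNoPath : ¬∃ f : ℕ → V, Function.Injective f ∧ (∀ n, G.Adj (f n) (f (n + 1))) ∧
      ∀ n, (G.neighborSet (f (2 * n))).ncard = 2) :
    ∀ z w : V, G.Adj z w → (G.neighborSet z).ncard = 2 → ∃ M, Good G z w M := by
  classical
  by_contra hbad
  push_neg at hbad
  obtain ⟨z0, w0, hzw0, h20, hM0⟩ := hbad
  set Bad : V × V → Prop := fun p => G.Adj p.1 p.2 ∧ (G.neighborSet p.1).ncard = 2 ∧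
    ∀ M, ¬ Good G p.1 p.2 M with hBad
  have hstep : ∀ p, Bad p → ∃ q, (G.Adj p.2 q.1 ∧ q.1 ≠ p.1 ∧ G.Adj q.1 q.2 ∧ q.2 ≠ p.2)
      ∧ Bad q := by
    rintro ⟨z, w⟩ ⟨hzw, h2, hnoM⟩
    by_contra hq
    push_neg at hq
    have hrec : ∀ t s : V, G.Adj w t → t ≠ z → (G.neighborSet t).ncard = 2 →
        G.Adj t s → s ≠ w → ∃ M, Good G t s M := by
      intro t s hwt htz ht2 hts hsw
      by_contra hM
      push_neg at hM
      have hnb : ¬ Bad (t, s) := hq (t, s) ⟨hwt, htz, hts, hsw⟩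
      exact hnb ⟨hts, ht2, fun M => hM M⟩
    obtain ⟨M, hM⟩ := step hA hLF hMinDeg hzw h2 hrec
    exact hnoM M hM
  have hne : Bad (z0, w0) := ⟨hzw0, h20, hM0⟩
  let f : ℕ → {p : V × V // Bad p} := fun n =>
    Nat.rec ⟨(z0, w0), hne⟩ (fun _ prev => ⟨(hstep prev.1 prev.2).choose,
      (hstep prev.1 prev.2).choose_spec.2⟩) n
  have hrel : ∀ n, G.Adj (f n).1.2 (f (n + 1)).1.1 ∧ (f (n + 1)).1.1 ≠ (f n).1.1 ∧
      G.Adj (f (n + 1)).1.1 (f (n + 1)).1.2 ∧ (f (n + 1)).1.2 ≠ (f n).1.2 := by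
    intro n
    exact (hstep (f n).1 (f n).2).choose_spec.1
  let g : ℕ → V := fun n => if n % 2 = 0 then ((f (n / 2)).1).1 else ((f (n / 2)).1).2
  have hg1 : ∀ k, g (2 * k) = ((f k).1).1 := by
    intro k
    show (if (2 * k) % 2 = 0 then ((f ((2 * k) / 2)).1).1 else ((f ((2 * k) / 2)).1).2) = _
    rw [if_pos (by omega), show (2 * k) / 2 = k by omega]
  have hg2 : ∀ k, g (2 * k + 1) = ((f k).1).2 := by
    intro k
    show (if (2 * k + 1) % 2 = 0 then ((f ((2 * k + 1) / 2)).1).1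
      else ((f ((2 * k + 1) / 2)).1).2) = _
    rw [if_neg (by omega), show (2 * k + 1) / 2 = k by omega]
  have hadj : ∀ n, G.Adj (g n) (g (n + 1)) := by
    intro n
    obtain ⟨k, rfl | rfl⟩ := Nat.even_or_odd' n
    · rw [hg1, hg2]
      exact (f k).2.1
    · rw [hg2, show 2 * k + 1 + 1 = 2 * (k + 1) by ring, hg1]
      exact (hrel k).1
  have hnb : ∀ n, g (n + 2) ≠ g n := by
    intro n
    obtain ⟨k, rfl | rfl⟩ := Nat.even_or_odd' n
    · rw [show 2 * k + 2 = 2 * (k + 1) by ring, hg1, hg1]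
      exact (hrel k).2.1
    · rw [show 2 * k + 1 + 2 = 2 * (k + 1) + 1 by ring, hg2, hg2]
      exact (hrel k).2.2.2
  have hdeg : ∀ n, (G.neighborSet (g (2 * n))).ncard = 2 := by
    intro n
    rw [hg1]
    exact (f n).2.2.1
  exact hNoPath ⟨g, natWalk_injective hA g hadj hnb, hadj, hdeg⟩

theorem main (hA : G.IsAcyclic) (hLF : G.LocallyFinite)
    (hMinDeg : ∀ v : V, 2 ≤ (G.neighborSet v).ncard)
    (hNoPath : ¬∃ f : ℕ → V, Function.Injective f ∧ (∀ n, G.Adj (f n) (f (n + 1))) ∧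
      ∀ n, (G.neighborSet (f (2 * n))).ncard = 2) (x : V) :
    ∃ M : G.Subgraph, M.IsMatching ∧ M.verts.Finite ∧ x ∈ M.verts ∧
      ∀ y ∉ M.verts, 2 ≤ (G.neighborSet y \ M.verts).ncard := by
  classical
  have hall := allGood hA hLF hMinDeg hNoPath
  have hxne : (G.neighborSet x).Nonempty :=
    Set.nonempty_of_ncard_ne_zero (by have := hMinDeg x; omega)
  obtain ⟨y0, hy0⟩ := hxne
  have hxy0 : G.Adj x y0 := hy0
  obtain ⟨N1, hN1m, hN1fin, hN1iii, hN1v, hN1vi', hN1vi⟩ :=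
    branches hA hLF hxy0 (fun t s _ _ ht2 hts _ => hall t s hts ht2)
  obtain ⟨N2, hN2m, hN2fin, hN2iii, hN2v, hN2vi', hN2vi⟩ :=
    branches hA hLF hxy0.symm (fun t s _ _ ht2 hts _ => hall t s hts ht2)
  have hxN1 : x ∉ N1.verts := by
    intro h
    obtain ⟨t, htx, hty, _, hAv⟩ := hN1iii x h
    exact hAv.ne_end rfl
  have hy0N1 : y0 ∉ N1.verts := by
    intro h
    obtain ⟨t, htx, hty, _, hAv⟩ := hN1iii y0 h
    exact not_avoid_of_adj_adj hA htx.symm hxy0 hty hAv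
  have hy0N2 : y0 ∉ N2.verts := by
    intro h
    obtain ⟨t, hty0, htx, _, hAv⟩ := hN2iii y0 h
    exact hAv.ne_end rfl
  have hxN2 : x ∉ N2.verts := by
    intro h
    obtain ⟨t, hty0, htx, _, hAv⟩ := hN2iii x h
    exact not_avoid_of_adj_adj hA hty0.symm hxy0.symm htx hAv
  have cross : ∀ t t' v, G.Adj x t → t ≠ y0 → G.Adj y0 t' → t' ≠ x →
      Avoid G x t v → Avoid G y0 t' v → False := by
    intro t t' v hxt hty0 hy0t' ht'x h1 h2
    have htt' : t ≠ t' := by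
      rintro rfl
      exact no_triangle hA hxt hy0t'.symm hxy0
    obtain ⟨p, hp⟩ := h1
    obtain ⟨q, hq⟩ := h2
    have hxq : x ∉ q.support := fun h =>
      not_avoid_of_adj_adj hA hy0t'.symm hxy0.symm ht'x (avoid_of_mem_support q hq h)
    have hAtt' : Avoid G x t t' := by
      refine ⟨p.append q.reverse, ?_⟩
      rw [Walk.mem_support_append_iff]
      rintro (h | h)
      · exact hp h
      · rw [Walk.support_reverse] at h
        exact hxq (List.mem_reverse.mp h)
    exact aux_path4 hA hxt.symm hxy0 hy0t' hty0 htt' (Ne.symm ht'x) hAtt'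
  -- the union of the two branch systems is a matching with disjoint verts
  have hdisj12 : Disjoint N1.verts N2.verts := by
    rw [Set.disjoint_left]
    intro v hv1 hv2
    obtain ⟨t, htx, hty, _, hAv1⟩ := hN1iii v hv1
    obtain ⟨t', hty0, htx', _, hAv2⟩ := hN2iii v hv2
    exact cross t t' v htx hty hty0 htx' hAv1 hAv2
  set N12 : G.Subgraph := N1 ⊔ N2 with hN12def
  have hN12m : N12.IsMatching := by
    refine hN1m.sup hN2m ?_
    rw [hN1m.support_eq_verts, hN2m.support_eq_verts]
    exact hdisj12
  have hN12verts : N12.verts = N1.verts ∪ N2.verts := Subgraph.verts_sup N1 N2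
  set M : G.Subgraph := G.subgraphOfAdj hxy0 ⊔ N12 with hMdef
  have hMverts : M.verts = {x, y0} ∪ (N1.verts ∪ N2.verts) := by
    rw [hMdef, Subgraph.verts_sup, subgraphOfAdj_verts, hN12verts]
  have hmm : ∀ v, v ∈ M.verts ↔ (v = x ∨ v = y0 ∨ v ∈ N1.verts ∨ v ∈ N2.verts) := by
    intro v
    rw [hMverts]
    simp [Set.mem_insert_iff, or_assoc]
  refine ⟨M, ?_, ?_, (hmm x).mpr (Or.inl rfl), ?_⟩
  · refine (Subgraph.IsMatching.subgraphOfAdj hxy0).sup hN12m ?_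
    rw [(Subgraph.IsMatching.subgraphOfAdj hxy0).support_eq_verts,
      hN12m.support_eq_verts, subgraphOfAdj_verts, hN12verts, Set.disjoint_left]
    rintro v (rfl | rfl) h
    · rcases h with h | h
      · exact hxN1 h
      · exact hxN2 h
    · rcases h with h | h
      · exact hy0N1 h
      · exact hy0N2 h
  · rw [hMverts]
    exact ((Set.finite_singleton _).insert _).union (hN1fin.union hN2fin)
  · intro y hy
    have hyx : y ≠ x := fun h => hy ((hmm y).mpr (Or.inl h))
    have hyy0 : y ≠ y0 := fun h => hy ((hmm y).mpr (Or.inr (Or.inl h)))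
    have hyN1 : y ∉ N1.verts := fun h => hy ((hmm y).mpr (Or.inr (Or.inr (Or.inl h))))
    have hyN2 : y ∉ N2.verts := fun h => hy ((hmm y).mpr (Or.inr (Or.inr (Or.inr h))))
    have key : (G.neighborSet y ∩ M.verts).ncard ≤ 1 ∧
        ((G.neighborSet y ∩ M.verts).Nonempty → 3 ≤ (G.neighborSet y).ncard) := by
      by_cases hadjx : G.Adj y x
      · have hclaim : G.neighborSet y ∩ M.verts = {x} := by
          apply Set.eq_singleton_iff_unique_mem.mpr
          refine ⟨⟨hadjx, (hmm x).mpr (Or.inl rfl)⟩, ?_⟩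
          rintro b ⟨hb1, hb2⟩
          rcases (hmm b).mp hb2 with rfl | rfl | hbN1 | hbN2
          · rfl
          · exact (no_triangle hA hxy0 (hb1 : G.Adj y b).symm hadjx.symm).elim
          · exact (Set.eq_empty_iff_forall_notMem.mp (hN1vi' y hyN1 hadjx) b
              ⟨hb1, hbN1⟩).elim
          · obtain ⟨t', hty0, ht'x, ht'N2, hAv⟩ := hN2iii b hbN2
            have hAy : Avoid G y0 t' y := by
              refine hAv.trans ⟨Walk.cons (hb1 : G.Adj y b).symm Walk.nil, ?_⟩
              intro hmem
              simp only [Walk.support_cons, Walk.support_nil, List.mem_cons,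
                List.mem_singleton, List.not_mem_nil, or_false] at hmem
              rcases hmem with h | h
              · exact hy0N2 (h ▸ hbN2)
              · exact hyy0 h.symm
            exact (aux_path4 hA hty0.symm hxy0.symm hadjx.symm ht'x
              (fun h => hyN2 (h ▸ ht'N2)) hyy0.symm hAy).elim
        refine ⟨by rw [hclaim]; simp, fun _ => ?_⟩
        have hne2 : (G.neighborSet y).ncard ≠ 2 :=
          fun hdeg => hyN1 (hN1v y hadjx.symm hyy0 hdeg)
        have := hMinDeg y
        omega
      · by_cases hadjy0 : G.Adj y y0
        · have hclaim : G.neighborSet y ∩ M.verts = {y0} := by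
            apply Set.eq_singleton_iff_unique_mem.mpr
            refine ⟨⟨hadjy0, (hmm y0).mpr (Or.inr (Or.inl rfl))⟩, ?_⟩
            rintro b ⟨hb1, hb2⟩
            rcases (hmm b).mp hb2 with rfl | rfl | hbN1 | hbN2
            · exact absurd hb1 hadjx
            · rfl
            · obtain ⟨t, htx, hty, htN1, hAv⟩ := hN1iii b hbN1
              have hAy : Avoid G x t y := by
                refine hAv.trans ⟨Walk.cons (hb1 : G.Adj y b).symm Walk.nil, ?_⟩
                intro hmem
                simp only [Walk.support_cons, Walk.support_nil, List.mem_cons,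
                  List.mem_singleton, List.not_mem_nil, or_false] at hmem
                rcases hmem with h | h
                · exact hxN1 (h ▸ hbN1)
                · exact hyx h.symm
              exact (aux_path4 hA htx.symm hxy0 hadjy0.symm hty
                (fun h => hyN1 (h ▸ htN1)) hyx.symm hAy).elim
            · exact (Set.eq_empty_iff_forall_notMem.mp (hN2vi' y hyN2 hadjy0) b
                ⟨hb1, hbN2⟩).elim
          refine ⟨by rw [hclaim]; simp, fun _ => ?_⟩
          have hne2 : (G.neighborSet y).ncard ≠ 2 :=
            fun hdeg => hyN2 (hN2v y hadjy0.symm hyx hdeg)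
          have := hMinDeg y
          omega
        · -- y adjacent to neither x nor y0
          by_cases hne : (G.neighborSet y ∩ M.verts).Nonempty
          swap
          · rw [Set.not_nonempty_iff_eq_empty] at hne
            rw [hne]
            simp
          obtain ⟨b0, hb01, hb02⟩ := hne
          have havy : ∀ b, G.Adj y b → b ∈ N1.verts → ∃ t, G.Adj x t ∧ t ≠ y0 ∧
              Avoid G x t y := by
            intro b hb hbN1
            obtain ⟨t, htx, hty, _, hAv⟩ := hN1iii b hbN1
            refine ⟨t, htx, hty, hAv.trans ⟨Walk.cons hb.symm Walk.nil, ?_⟩⟩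
            intro hmem
            simp only [Walk.support_cons, Walk.support_nil, List.mem_cons,
              List.mem_singleton, List.not_mem_nil, or_false] at hmem
            rcases hmem with h | h
            · exact hxN1 (h ▸ hbN1)
            · exact hyx h.symm
          have havy2 : ∀ b, G.Adj y b → b ∈ N2.verts → ∃ t', G.Adj y0 t' ∧ t' ≠ x ∧
              Avoid G y0 t' y := by
            intro b hb hbN2
            obtain ⟨t', hty0, ht'x, _, hAv⟩ := hN2iii b hbN2
            refine ⟨t', hty0, ht'x, hAv.trans ⟨Walk.cons hb.symm Walk.nil, ?_⟩⟩
            intro hmem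
            simp only [Walk.support_cons, Walk.support_nil, List.mem_cons,
              List.mem_singleton, List.not_mem_nil, or_false] at hmem
            rcases hmem with h | h
            · exact hy0N2 (h ▸ hbN2)
            · exact hyy0 h.symm
          rcases (hmm b0).mp hb02 with rfl | rfl | hb0N1 | hb0N2
          · exact absurd hb01 hadjx
          · exact absurd hb01 hadjy0
          · -- all neighbors in M are in N1
            have hclaim : G.neighborSet y ∩ M.verts = G.neighborSet y ∩ N1.verts := by
              ext b
              constructor
              · rintro ⟨hb1, hb2⟩
                rcases (hmm b).mp hb2 with rfl | rfl | hbN1 | hbN2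
                · exact absurd hb1 hadjx
                · exact absurd hb1 hadjy0
                · exact ⟨hb1, hbN1⟩
                · obtain ⟨t, htx, hty, hAvy⟩ := havy b0 hb01 hb0N1
                  obtain ⟨t', hty0, ht'x, hAvy2⟩ := havy2 b hb1 hbN2
                  exact (cross t t' y htx hty hty0 ht'x hAvy hAvy2).elim
              · rintro ⟨hb1, hbN1⟩
                exact ⟨hb1, (hmm b).mpr (Or.inr (Or.inr (Or.inl hbN1)))⟩
            obtain ⟨hc1, hc2⟩ := hN1vi y hyN1 hyx hadjx
            rw [hclaim]
            exact ⟨hc1, fun hne' => hc2 hne'⟩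
          · have hclaim : G.neighborSet y ∩ M.verts = G.neighborSet y ∩ N2.verts := by
              ext b
              constructor
              · rintro ⟨hb1, hb2⟩
                rcases (hmm b).mp hb2 with rfl | rfl | hbN1 | hbN2
                · exact absurd hb1 hadjx
                · exact absurd hb1 hadjy0
                · obtain ⟨t, htx, hty, hAvy⟩ := havy b hb1 hbN1
                  obtain ⟨t', hty0, ht'x, hAvy2⟩ := havy2 b0 hb01 hb0N2
                  exact (cross t t' y htx hty hty0 ht'x hAvy hAvy2).elim
                · exact ⟨hb1, hbN2⟩
              · rintro ⟨hb1, hbN2⟩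
                exact ⟨hb1, (hmm b).mpr (Or.inr (Or.inr (Or.inr hbN2)))⟩
            obtain ⟨hc1, hc2⟩ := hN2vi y hyN2 hyy0 hadjy0
            rw [hclaim]
            exact ⟨hc1, fun hne' => hc2 hne'⟩
    -- finish by arithmetic
    have hNfin : (G.neighborSet y).Finite := by
      letI := hLF y
      exact Set.toFinite _
    by_cases hne : (G.neighborSet y ∩ M.verts).Nonempty
    · have h3 := key.2 hne
      have h1 := key.1
      have hIfin : (G.neighborSet y ∩ M.verts).Finite := hNfin.subset Set.inter_subset_left
      rw [← Set.diff_self_inter, Set.ncard_diff Set.inter_subset_left hIfin]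
      omega
    · rw [Set.not_nonempty_iff_eq_empty] at hne
      have hdiff : G.neighborSet y \ M.verts = G.neighborSet y := by
        ext b
        simp only [Set.mem_diff]
        refine ⟨fun h => h.1, fun h => ⟨h, fun hbM => ?_⟩⟩
        exact Set.eq_empty_iff_forall_notMem.mp hne b ⟨h, hbM⟩
      rw [hdiff]
      exact hMinDeg y

end Stmt13Aux

/-- Let `G` be a locally finite acyclic graph in which every vertex has degree at
least 2, containing no infinite injective path on which every other vertex has
degree 2.  Then every vertex `x` is covered by some finite matching `M` such that,
after deleting the vertices covered by `M`, every remaining vertex still has at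
least two remaining neighbors. -/
theorem stmt_13 {V : Type*} (G : SimpleGraph V) (hLF : G.LocallyFinite)
    (hAcyclic : G.IsAcyclic)
    (hMinDeg : ∀ v : V, 2 ≤ (G.neighborSet v).ncard)
    (hNoPath : ¬∃ f : ℕ → V, Function.Injective f ∧ (∀ n, G.Adj (f n) (f (n + 1))) ∧
      ∀ n, (G.neighborSet (f (2 * n))).ncard = 2)
    (x : V) :
    ∃ M : G.Subgraph, M.IsMatching ∧ M.verts.Finite ∧ x ∈ M.verts ∧
      ∀ y ∉ M.verts, 2 ≤ (G.neighborSet y \ M.verts).ncard := by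
  exact Stmt13Aux.main hAcyclic hLF hMinDeg hNoPath x
end

section
/- Let G be a locally finite acyclic graph with minimum degree at least 2, let E be a finite connected set of vertices, and let A be the set of vertices y ∉ E that have at most one neighbor outside E in the induced subgraph G[V(G) \ E]. Then every y ∈ A has degree exactly 2 in G and exactly one neighbor outside E; moreover the map sending each y ∈ A to its unique neighbor y' ∉ E is injective. -/
open SimpleGraph

/-- Given `a b ∈ E` with `G[E]` connected, there is a path from `a` to `b` in `G`
whose support lies in `E`. -/
lemma exists_path_in_E {V : Type*} (G : SimpleGraph V) (E : Set V)
    (hConn : (G.induce E).Connected) {a b : V} (ha : a ∈ E) (hb : b ∈ E) :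
    ∃ q : G.Walk a b, q.IsPath ∧ ∀ x ∈ q.support, x ∈ E := by
  classical
  have hr : (G.induce E).Reachable ⟨a, ha⟩ ⟨b, hb⟩ := hConn.preconnected _ _
  obtain ⟨w⟩ := hr
  let f : G.induce E ↪g G := SimpleGraph.Embedding.induce E
  let w' : G.Walk a b := w.map f.toHom
  refine ⟨w'.toPath.1, w'.toPath.2, fun x hx => ?_⟩
  have hsub := SimpleGraph.Walk.support_toPath_subset w'
  have hx' : x ∈ w'.support := hsub hx
  rw [show w'.support = w.support.map f.toHom from SimpleGraph.Walk.support_map _ _] at hx'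
  simp only [List.mem_map] at hx'
  obtain ⟨⟨x', hx'E⟩, _, rfl⟩ := hx'
  exact hx'E

/-- A vertex outside `E` has at most one neighbor inside `E` (acyclicity). -/
lemma inside_neighbor_unique {V : Type*} (G : SimpleGraph V) (hAcyclic : G.IsAcyclic)
    (E : Set V) (hConn : (G.induce E).Connected) {y a b : V} (hy : y ∉ E)
    (ha : a ∈ E) (hb : b ∈ E) (hya : G.Adj y a) (hyb : G.Adj y b) : a = b := by
  obtain ⟨q, hq, hqE⟩ := exists_path_in_E G E hConn ha hb
  -- two paths from y to b
  have hp₁ : (SimpleGraph.Walk.cons hyb SimpleGraph.Walk.nil).IsPath := by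
    simp [SimpleGraph.Walk.cons_isPath_iff, hyb.ne]
  have hynq : y ∉ q.support := fun h => hy (hqE y h)
  have hp₂ : (SimpleGraph.Walk.cons hya q).IsPath := by
    rw [SimpleGraph.Walk.cons_isPath_iff]
    exact ⟨hq, hynq⟩
  have := hAcyclic.path_unique ⟨_, hp₁⟩ ⟨_, hp₂⟩
  have hw : (SimpleGraph.Walk.cons hyb SimpleGraph.Walk.nil) =
      (SimpleGraph.Walk.cons hya q) := congrArg Subtype.val this
  have hs := congrArg SimpleGraph.Walk.support hw
  rw [SimpleGraph.Walk.support_cons, SimpleGraph.Walk.support_cons,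
    SimpleGraph.Walk.support_nil] at hs
  have hq' : q.support = a :: q.support.tail := SimpleGraph.Walk.support_eq_cons q
  rw [hq'] at hs
  injection hs with _ h
  injection h with h1 _
  exact h1.symm

/-- Let `G` be a locally finite acyclic graph with minimum degree at least 2, let `E`
be a finite set of vertices with `G[E]` connected, and let `A` be the set of vertices
`y ∉ E` having at most one neighbor outside `E`.  Then every `y ∈ A` has degree
exactly 2 in `G` and exactly one neighbor outside `E`, and the map sending `y ∈ A`
to its unique neighbor outside `E` is injective. -/
theorem stmt_14 {V : Type*} (G : SimpleGraph V) (hLF : G.LocallyFinite)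
    (hAcyclic : G.IsAcyclic)
    (hMinDeg : ∀ v : V, 2 ≤ (G.neighborSet v).ncard)
    (E : Set V) (hE : E.Finite) (hConn : (G.induce E).Connected)
    (A : Set V) (hA : A = {y : V | y ∉ E ∧ (G.neighborSet y \ E).ncard ≤ 1}) :
    (∀ y ∈ A, (G.neighborSet y).ncard = 2 ∧ (G.neighborSet y \ E).ncard = 1) ∧
    (∀ y₁ ∈ A, ∀ y₂ ∈ A, ∀ z : V, z ∉ E → G.Adj y₁ z → G.Adj y₂ z → y₁ = y₂) := by
  subst hA
  -- key counting fact
  have key : ∀ y : V, y ∉ E → (G.neighborSet y \ E).ncard ≤ 1 →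
      (G.neighborSet y).ncard = 2 ∧ (G.neighborSet y \ E).ncard = 1 ∧
      (G.neighborSet y ∩ E).ncard = 1 := by
    intro y hyE hout
    haveI := hLF y
    have hfin : (G.neighborSet y).Finite := (G.neighborSet y).toFinite
    have hsplit : (G.neighborSet y ∩ E).ncard + (G.neighborSet y \ E).ncard
        = (G.neighborSet y).ncard :=
      Set.ncard_inter_add_ncard_diff_eq_ncard _ _ hfin
    have hin : (G.neighborSet y ∩ E).ncard ≤ 1 := by
      rw [Set.ncard_le_one_iff_eq]
      rcases Set.eq_empty_or_nonempty (G.neighborSet y ∩ E) with h | ⟨a, haN, haE⟩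
      · exact Or.inl h
      · refine Or.inr ⟨a, Set.eq_singleton_iff_unique_mem.mpr ⟨⟨haN, haE⟩, ?_⟩⟩
        rintro b ⟨hbN, hbE⟩
        exact inside_neighbor_unique G hAcyclic E hConn hyE hbE haE hbN haN
    have h2 := hMinDeg y
    omega
  constructor
  · intro y hy
    obtain ⟨h1, h2, _⟩ := key y hy.1 hy.2
    exact ⟨h1, h2⟩
  · rintro y₁ ⟨hy₁E, hy₁o⟩ y₂ ⟨hy₂E, hy₂o⟩ z hzE hz₁ hz₂
    by_contra hne
    obtain ⟨-, -, hin₁⟩ := key y₁ hy₁E hy₁o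
    obtain ⟨-, -, hin₂⟩ := key y₂ hy₂E hy₂o
    obtain ⟨a₁, ha₁⟩ := Set.ncard_eq_one.mp hin₁
    obtain ⟨a₂, ha₂⟩ := Set.ncard_eq_one.mp hin₂
    have ha₁m : a₁ ∈ G.neighborSet y₁ ∩ E := ha₁ ▸ rfl
    have ha₂m : a₂ ∈ G.neighborSet y₂ ∩ E := ha₂ ▸ rfl
    have ha₁adj : G.Adj y₁ a₁ := ha₁m.1
    obtain ⟨q, hq, hqE⟩ := exists_path_in_E G E hConn ha₁m.2 ha₂m.2
    -- path 1 : y₁ - z - y₂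
    have hz₂' : G.Adj z y₂ := hz₂.symm
    have hp₁ : (SimpleGraph.Walk.cons hz₁ (SimpleGraph.Walk.cons hz₂' SimpleGraph.Walk.nil)).IsPath := by
      simp [SimpleGraph.Walk.cons_isPath_iff, hz₂.ne', hz₁.ne, hne]
    -- path 2 : y₁ - a₁ - ... - a₂ - y₂
    have ha₂y₂ : G.Adj a₂ y₂ := ha₂m.1.symm
    have hy₂nq : y₂ ∉ q.support := fun h => hy₂E (hqE y₂ h)
    have hqc : (q.concat ha₂y₂).IsPath := by
      have : q.concat ha₂y₂ = (SimpleGraph.Walk.cons ha₂y₂.symm q.reverse).reverse := by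
        rw [SimpleGraph.Walk.reverse_cons, SimpleGraph.Walk.reverse_reverse,
          SimpleGraph.Walk.concat_eq_append]
      rw [this]
      apply SimpleGraph.Walk.IsPath.reverse
      rw [SimpleGraph.Walk.cons_isPath_iff]
      refine ⟨hq.reverse, ?_⟩
      rw [SimpleGraph.Walk.support_reverse, List.mem_reverse]
      exact hy₂nq
    have hp₂ : (SimpleGraph.Walk.cons ha₁adj (q.concat ha₂y₂)).IsPath := by
      rw [SimpleGraph.Walk.cons_isPath_iff]
      refine ⟨hqc, ?_⟩
      rw [SimpleGraph.Walk.support_concat, List.mem_append]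
      rintro (h | h)
      · exact hy₁E (hqE y₁ h)
      · simp at h; exact hne h
    have := hAcyclic.path_unique ⟨_, hp₁⟩ ⟨_, hp₂⟩
    have hw : (SimpleGraph.Walk.cons hz₁ (SimpleGraph.Walk.cons hz₂' SimpleGraph.Walk.nil)) =
        (SimpleGraph.Walk.cons ha₁adj (q.concat ha₂y₂)) := congrArg Subtype.val this
    have hs := congrArg SimpleGraph.Walk.support hw
    rw [SimpleGraph.Walk.support_cons, SimpleGraph.Walk.support_cons,
      SimpleGraph.Walk.support_cons, SimpleGraph.Walk.support_nil] at hs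
    have hc : (q.concat ha₂y₂).support = a₁ :: (q.concat ha₂y₂).support.tail :=
      SimpleGraph.Walk.support_eq_cons _
    rw [hc] at hs
    -- second entries: z = a₁, contradiction with z ∉ E, a₁ ∈ E
    have : z = a₁ := by injection hs with _ h; injection h
    exact hzE (this ▸ ha₁m.2)
end

section
/- Let H be a finite multigraph with maximum degree at most k and maximum edge multiplicity at most p, and let U ⊆ V(H). Suppose (1) the induced sub-multigraph on V(H) \ U has chromatic index at most k, and (2) every vertex y adjacent to some vertex of U satisfies deg_H(y) ≤ k - p. Then the chromatic index of H is at most k. -/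
set_option linter.unusedSectionVars false

open Finset

namespace Vz

variable {V : Type*} [Fintype V] [DecidableEq V] {k p : ℕ}

section

variable (mult : V → V → ℕ)

/-- symmetry of a partial coloring -/
def CSym (C : V → V → ℕ → Option (Fin k)) : Prop := ∀ x y i, C x y i = C y x i

/-- only genuine slots are colored -/
def CDom (C : V → V → ℕ → Option (Fin k)) : Prop := ∀ x y i, C x y i ≠ none → i < mult x y

/-- properness: at each vertex, at most one slot of each color -/
def CProper (C : V → V → ℕ → Option (Fin k)) : Prop :=
  ∀ ⦃v : V⦄ ⦃c : Fin k⦄ ⦃w i w' i'⦄, i < mult v w → i' < mult v w' →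
    C v w i = some c → C v w' i' = some c → w = w' ∧ i = i'

def UsedAt (C : V → V → ℕ → Option (Fin k)) (v : V) (c : Fin k) : Prop :=
  ∃ w i, i < mult v w ∧ C v w i = some c

/-- the set of slots at a vertex -/
def slotsAt (v : V) : Finset (V × ℕ) :=
  Finset.univ.biUnion fun w => ({w} : Finset V) ×ˢ Finset.range (mult v w)

lemma mem_slotsAt {v : V} {s : V × ℕ} : s ∈ slotsAt mult v ↔ s.2 < mult v s.1 := by
  rcases s with ⟨w, i⟩
  simp [slotsAt]

lemma card_slotsAt (v : V) : (slotsAt mult v).card = ∑ w, mult v w := by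
  rw [slotsAt, Finset.card_biUnion]
  · refine Finset.sum_congr rfl fun w _ => by simp
  · intro a _ b _ hab
    simp only [Finset.disjoint_left]
    rintro ⟨w, i⟩ h1 h2
    simp only [Finset.mem_product, Finset.mem_singleton] at h1 h2
    exact hab (h1.1.symm.trans h2.1)

noncomputable def usedSet (C : V → V → ℕ → Option (Fin k)) (v : V) : Finset (Fin k) :=
  @Finset.filter _ (fun c => UsedAt mult C v c) (Classical.decPred _) Finset.univ

lemma mem_usedSet {C : V → V → ℕ → Option (Fin k)} {v c} :
    c ∈ usedSet mult C v ↔ UsedAt mult C v c := by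
  simp [usedSet]

def coloredAt (C : V → V → ℕ → Option (Fin k)) (v : V) : Finset (V × ℕ) :=
  (slotsAt mult v).filter (fun s => C v s.1 s.2 ≠ none)

lemma card_usedSet_le (C : V → V → ℕ → Option (Fin k)) (v : V) :
    (usedSet mult C v).card ≤ (coloredAt mult C v).card := by
  rcases Finset.eq_empty_or_nonempty (usedSet mult C v) with h | ⟨c₀, _⟩
  · simp [h]
  · apply Finset.card_le_card_of_surjOn (fun s => (C v s.1 s.2).getD c₀)
    intro c hc
    obtain ⟨w, i, hlt, heq⟩ := (mem_usedSet mult (C := C)).mp (by simpa using hc)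
    refine ⟨(w, i), ?_, ?_⟩
    · simp only [Finset.mem_coe, coloredAt, Finset.mem_filter, mem_slotsAt]
      exact ⟨hlt, by simp [heq]⟩
    · simp [heq]

lemma coloredAt_card_le (C : V → V → ℕ → Option (Fin k)) (v : V) :
    (coloredAt mult C v).card ≤ ∑ w, mult v w := by
  rw [← card_slotsAt mult v]
  exact Finset.card_filter_le _ _

lemma coloredAt_card_lt {C : V → V → ℕ → Option (Fin k)} {v w : V} {i : ℕ}
    (hi : i < mult v w) (hnone : C v w i = none) :
    (coloredAt mult C v).card + 1 ≤ ∑ u, mult v u := by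
  rw [← card_slotsAt mult v]
  have hsub : coloredAt mult C v ⊆ (slotsAt mult v).erase (w, i) := by
    intro s hs
    rw [coloredAt, Finset.mem_filter] at hs
    refine Finset.mem_erase.mpr ⟨?_, hs.1⟩
    rintro rfl
    exact hs.2 hnone
  have h2 : ((slotsAt mult v).erase (w, i)).card + 1 = (slotsAt mult v).card := by
    rw [Finset.card_erase_add_one]
    exact (mem_slotsAt mult).mpr hi
  have := Finset.card_le_card hsub
  omega

lemma exists_free {C : V → V → ℕ → Option (Fin k)} {v : V}
    (h : (coloredAt mult C v).card < k) : ∃ c : Fin k, ¬ UsedAt mult C v c := by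
  have h2 : (usedSet mult C v).card < k := lt_of_le_of_lt (card_usedSet_le mult C v) h
  have h3 : usedSet mult C v ≠ Finset.univ := by
    intro he; rw [he, Finset.card_univ, Fintype.card_fin] at h2; omega
  obtain ⟨c, -, hc⟩ := Finset.exists_of_ssubset (Finset.ssubset_univ_iff.mpr h3)
  exact ⟨c, fun hu => hc ((mem_usedSet mult).mpr hu)⟩

lemma freeSet_card {C : V → V → ℕ → Option (Fin k)} {v : V} :
    k ≤ (Finset.univ \ usedSet mult C v).card + (coloredAt mult C v).card := by
  have := card_usedSet_le mult C v
  have h2 : (Finset.univ \ usedSet mult C v).card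
      = k - (usedSet mult C v).card := by
    rw [Finset.card_sdiff_of_subset (Finset.subset_univ _), Finset.card_univ, Fintype.card_fin]
  have h3 : (usedSet mult C v).card ≤ k := by
    calc (usedSet mult C v).card ≤ Finset.univ.card := Finset.card_le_card (Finset.subset_univ _)
    _ = k := by rw [Finset.card_univ, Fintype.card_fin]
  omega

/-! ### single slot update -/

def upd (C : V → V → ℕ → Option (Fin k)) (x z : V) (i : ℕ) (γ : Fin k) :
    V → V → ℕ → Option (Fin k) :=
  fun a b j => if (a = x ∧ b = z ∨ a = z ∧ b = x) ∧ j = i then some γ else C a b j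

lemma upd_self {C : V → V → ℕ → Option (Fin k)} {x z : V} {i : ℕ} {γ : Fin k} :
    upd C x z i γ x z i = some γ := by simp [upd]

lemma upd_ne {C : V → V → ℕ → Option (Fin k)} {x z : V} {i : ℕ} {γ : Fin k}
    {a b : V} {j : ℕ} (h : ¬ ((a = x ∧ b = z ∨ a = z ∧ b = x) ∧ j = i)) :
    upd C x z i γ a b j = C a b j := if_neg h

lemma upd_cases {C : V → V → ℕ → Option (Fin k)} {x z : V} {i : ℕ} {γ : Fin k}
    {a b : V} {j : ℕ} {c : Fin k} (h : upd C x z i γ a b j = some c) :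
    ((a = x ∧ b = z ∨ a = z ∧ b = x) ∧ j = i ∧ c = γ) ∨
      (¬ ((a = x ∧ b = z ∨ a = z ∧ b = x) ∧ j = i) ∧ C a b j = some c) := by
  by_cases hc : (a = x ∧ b = z ∨ a = z ∧ b = x) ∧ j = i
  · left
    rw [upd, if_pos hc] at h
    exact ⟨hc.1, hc.2, (Option.some_injective _ h).symm⟩
  · right
    rw [upd, if_neg hc] at h
    exact ⟨hc, h⟩

lemma upd_sym {C : V → V → ℕ → Option (Fin k)} (hS : CSym C) (x z : V) (i : ℕ) (γ : Fin k) :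
    CSym (upd C x z i γ) := by
  intro a b j
  by_cases hc : (a = x ∧ b = z ∨ a = z ∧ b = x) ∧ j = i
  · rw [upd, if_pos hc, upd, if_pos (by tauto)]
  · rw [upd, if_neg hc, upd, if_neg (by tauto), hS]

lemma upd_dom {C : V → V → ℕ → Option (Fin k)} (hD : CDom mult C) {x z : V} {i : ℕ}
    (γ : Fin k) (h1 : i < mult x z) (h2 : i < mult z x) : CDom mult (upd C x z i γ) := by
  intro a b j hne
  by_cases hc : (a = x ∧ b = z ∨ a = z ∧ b = x) ∧ j = i
  · obtain ⟨hab | hab, hj⟩ := hc <;> (obtain ⟨rfl, rfl⟩ := hab; subst hj)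
    · exact h1
    · exact h2
  · exact hD a b j (by rwa [upd, if_neg hc] at hne)

lemma upd_monotone {C : V → V → ℕ → Option (Fin k)} {x z : V} {i : ℕ} {γ : Fin k}
    {a b : V} {j : ℕ} (h : C a b j ≠ none) : upd C x z i γ a b j ≠ none := by
  by_cases hc : (a = x ∧ b = z ∨ a = z ∧ b = x) ∧ j = i
  · rw [upd, if_pos hc]; simp
  · rwa [upd, if_neg hc]

lemma upd_proper {C : V → V → ℕ → Option (Fin k)} (hP : CProper mult C) {x z : V} {i : ℕ}
    {γ : Fin k} (hxz : x ≠ z) (hi : i < mult x z)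
    (hγx : ¬ UsedAt mult C x γ) (hγz : ¬ UsedAt mult C z γ) :
    CProper mult (upd C x z i γ) := by
  intro v c w m w' m' hw hw' hc hc'
  rcases upd_cases hc with ⟨hpat, hji, hcγ⟩ | ⟨hpat, hold⟩
  · rcases upd_cases hc' with ⟨hpat', hji', -⟩ | ⟨hpat', hold'⟩
    · -- both updated; same vertex v
      subst hji; subst hji'
      rcases hpat with ⟨rfl, rfl⟩ | ⟨rfl, rfl⟩ <;> rcases hpat' with ⟨h1, rfl⟩ | ⟨h1, rfl⟩
      · exact ⟨rfl, rfl⟩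
      · exact absurd h1 hxz
      · exact absurd h1 hxz.symm
      · exact ⟨rfl, rfl⟩
    · -- second is old, colored c = γ
      exfalso
      subst hcγ
      rcases hpat with ⟨rfl, -⟩ | ⟨rfl, -⟩
      · exact hγx ⟨w', m', hw', hold'⟩
      · exact hγz ⟨w', m', hw', hold'⟩
  · rcases upd_cases hc' with ⟨hpat', hji', hcγ⟩ | ⟨hpat', hold'⟩
    · exfalso
      subst hcγ
      rcases hpat' with ⟨rfl, -⟩ | ⟨rfl, -⟩
      · exact hγx ⟨w, m, hw, hold⟩
      · exact hγz ⟨w, m, hw, hold⟩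
    · exact hP hw hw' hold hold'

lemma used_upd {C : V → V → ℕ → Option (Fin k)} {x z : V} {i : ℕ} {γ : Fin k}
    {v : V} {c : Fin k} (h : UsedAt mult (upd C x z i γ) v c) :
    UsedAt mult C v c ∨ c = γ := by
  obtain ⟨w, m, hm, hc⟩ := h
  rcases upd_cases hc with ⟨-, -, rfl⟩ | ⟨-, hold⟩
  · right; rfl
  · left; exact ⟨w, m, hm, hold⟩

/-! ### fans -/

inductive IsFan (C : V → V → ℕ → Option (Fin k)) (x y : V) (i₀ : ℕ) : List (V × ℕ) → Prop
  | base (h0 : i₀ < mult x y) (hnone : C x y i₀ = none) : IsFan C x y i₀ [(y, i₀)]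
  | cons {z : V} {i : ℕ} {w : V} {j : ℕ} {L : List (V × ℕ)} (c : Fin k)
      (hfan : IsFan C x y i₀ ((w, j) :: L))
      (hi : i < mult x z) (hc : C x z i = some c)
      (hfree : ¬ UsedAt mult C w c)
      (hnm : (z, i) ∉ (w, j) :: L) :
      IsFan C x y i₀ ((z, i) :: (w, j) :: L)

variable {mult}

lemma IsFan.base_lt {C : V → V → ℕ → Option (Fin k)} {x y i₀ L}
    (h : IsFan mult C x y i₀ L) : i₀ < mult x y := by
  induction h with
  | base h0 _ => exact h0
  | cons _ _ _ _ _ _ ih => exact ih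

lemma IsFan.base_none {C : V → V → ℕ → Option (Fin k)} {x y i₀ L}
    (h : IsFan mult C x y i₀ L) : C x y i₀ = none := by
  induction h with
  | base _ h1 => exact h1
  | cons _ _ _ _ _ _ ih => exact ih

lemma IsFan.getLast {C : V → V → ℕ → Option (Fin k)} {x y i₀ L}
    (h : IsFan mult C x y i₀ L) : L.getLast? = some (y, i₀) := by
  induction h with
  | base _ _ => rfl
  | cons _ _ _ _ _ _ ih => rwa [List.getLast?_cons_cons]

lemma IsFan.mem_lt {C : V → V → ℕ → Option (Fin k)} {x y i₀ L}
    (h : IsFan mult C x y i₀ L) : ∀ s ∈ L, s.2 < mult x s.1 := by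
  induction h with
  | base h0 _ => intro s hs; rw [List.mem_singleton] at hs; subst hs; exact h0
  | cons c hfan hi hc hfree hnm ih =>
      intro s hs
      rcases List.mem_cons.mp hs with rfl | hs
      · exact hi
      · exact ih s hs

lemma IsFan.nodup {C : V → V → ℕ → Option (Fin k)} {x y i₀ L}
    (h : IsFan mult C x y i₀ L) : L.Nodup := by
  induction h with
  | base _ _ => simp
  | cons c hfan hi hc hfree hnm ih => exact List.nodup_cons.mpr ⟨hnm, ih⟩

lemma IsFan.ne_nil {C : V → V → ℕ → Option (Fin k)} {x y i₀ L}
    (h : IsFan mult C x y i₀ L) : L ≠ [] := by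
  induction h with
  | base _ _ => simp
  | cons => simp

lemma IsFan.suffix {C : V → V → ℕ → Option (Fin k)} {x y i₀}
    {L₁ L₂ : List (V × ℕ)} (h : IsFan mult C x y i₀ (L₁ ++ L₂)) (hne : L₂ ≠ []) :
    IsFan mult C x y i₀ L₂ := by
  induction L₁ with
  | nil => exact h
  | cons a L₁ ih =>
      rw [List.cons_append] at h
      generalize hM : L₁ ++ L₂ = M at h
      cases h with
      | base h0 h1 =>
          exact absurd ((List.append_eq_nil_iff.mp hM).2) hne
      | cons c hfan hi hc hfree hnm =>
          exact ih (by rw [hM]; exact hfan)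

lemma IsFan.junction {C : V → V → ℕ → Option (Fin k)} {x y i₀ L}
    (h : IsFan mult C x y i₀ L) :
    ∀ {L₁ : List (V × ℕ)} {a b : V × ℕ} {L₂ : List (V × ℕ)},
      L = L₁ ++ a :: b :: L₂ → ∃ c, C x a.1 a.2 = some c ∧ ¬ UsedAt mult C b.1 c := by
  induction h with
  | base _ _ =>
      intro L₁ a b L₂ he
      exfalso
      rcases L₁ with - | ⟨q, L₁⟩ <;> simp at he
  | cons c hfan hi hc hfree hnm ih =>
      intro L₁ a b L₂ he
      rcases L₁ with - | ⟨q, L₁⟩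
      · simp only [List.nil_append, List.cons.injEq] at he
        obtain ⟨rfl, he2⟩ := he
        obtain ⟨rfl, -⟩ := he2
        exact ⟨c, hc, hfree⟩
      · simp only [List.cons_append, List.cons.injEq] at he
        exact ih he.2

/-- uniqueness of the splitting point in a `Nodup` list -/
lemma nodup_split_unique {α : Type*} {c : α} :
    ∀ {s₁ s₂ t₁ t₂ : List α}, (s₁ ++ c :: t₁).Nodup → s₁ ++ c :: t₁ = s₂ ++ c :: t₂ →
      s₁ = s₂ ∧ t₁ = t₂ := by
  intro s₁
  induction s₁ with
  | nil =>
      intro s₂ t₁ t₂ hnd he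
      rcases s₂ with - | ⟨a, s₂⟩
      · simpa using he
      · exfalso
        simp only [List.nil_append, List.cons_append, List.cons.injEq] at he
        obtain ⟨rfl, he2⟩ := he
        have : c ∈ (s₂ ++ c :: t₂ : List α) := by simp
        rw [← he2] at this
        exact (List.nodup_cons.mp hnd).1 this
  | cons a s₁ ih =>
      intro s₂ t₁ t₂ hnd he
      rcases s₂ with - | ⟨b, s₂⟩
      · exfalso
        simp only [List.cons_append, List.nil_append, List.cons.injEq] at he
        obtain ⟨heq, -⟩ := he
        subst heq
        have hmem : a ∈ (s₁ ++ a :: t₁ : List α) := by simp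
        rw [List.cons_append] at hnd
        exact (List.nodup_cons.mp hnd).1 hmem
      · simp only [List.cons_append, List.cons.injEq] at he
        obtain ⟨rfl, he2⟩ := he
        obtain ⟨h1, h2⟩ := ih (List.nodup_cons.mp hnd).2 he2
        exact ⟨by rw [h1], h2⟩

/-! ### fans survive recoloring a slot outside the fan -/

lemma isFan_upd {C : V → V → ℕ → Option (Fin k)} {x y : V} {i₀ : ℕ} {M : List (V × ℕ)}
    (hF : IsFan mult C x y i₀ M) {z : V} {i : ℕ} {γ : Fin k}
    (hzx : z ≠ x) (hnm : (z, i) ∉ M) (hγx : ¬ UsedAt mult C x γ) :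
    IsFan mult (upd C x z i γ) x y i₀ M := by
  induction hF with
  | base h0 h1 =>
      refine IsFan.base h0 ?_
      rw [upd, if_neg, h1]
      rintro ⟨h1 | h1, rfl⟩
      · exact hnm (by simp [h1.2.symm])
      · exact hzx h1.1.symm
  | cons c hfan hi hc hfree hnmem ih =>
      rename_i z' i' w j L
      have hznm : (z, i) ∉ (w, j) :: L := fun hmem => hnm (List.mem_cons_of_mem _ hmem)
      have hcγ : c ≠ γ := by rintro rfl; exact hγx ⟨z', i', hi, hc⟩
      refine IsFan.cons c (ih hznm) hi ?_ ?_ hnmem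
      · rw [upd, if_neg, hc]
        rintro ⟨h1 | h1, rfl⟩
        · exact hnm (by simp [h1.2.symm])
        · exact hzx h1.1.symm
      · intro hu
        rcases used_upd mult hu with h | rfl
        · exact hfree h
        · exact hcγ rfl

/-! ### the rotation lemma -/

lemma rotate (hsm : ∀ a b, mult a b = mult b a) (hL : ∀ a, mult a a = 0) :
    ∀ (L : List (V × ℕ)) {C : V → V → ℕ → Option (Fin k)},
      CSym C → CDom mult C → CProper mult C →
      ∀ {x y : V} {i₀ : ℕ} {z : V} {i : ℕ} {γ : Fin k},
      IsFan mult C x y i₀ L → L.head? = some (z, i) →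
      ¬ UsedAt mult C x γ → ¬ UsedAt mult C z γ →
      ∃ C' : V → V → ℕ → Option (Fin k), CSym C' ∧ CDom mult C' ∧ CProper mult C' ∧
        (∀ a b j, C a b j ≠ none → C' a b j ≠ none) ∧ C' x y i₀ ≠ none := by
  intro L
  induction L with
  | nil =>
      intro C hS hD hP x y i₀ z i γ hF hh hγx hγz
      simp at hh
  | cons hd tl ih =>
      intro C hS hD hP x y i₀ z i γ hF hh hγx hγz
      have hhd : hd = (z, i) := by simpa using hh
      subst hhd
      have hzx : z ≠ x := by
        intro he
        have := hF.mem_lt (z, i) (by simp)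
        rw [he, hL] at this
        omega
      cases hF with
      | base h0 h1 =>
          -- here z = y, i = i₀
          refine ⟨upd C x y i₀ γ, upd_sym hS x y i₀ γ,
            upd_dom mult hD γ h0 (by rwa [hsm x y] at h0),
            upd_proper mult hP (Ne.symm hzx) h0 hγx hγz,
            fun a b j h => upd_monotone h, ?_⟩
          rw [upd_self]
          simp
      | cons c hfan hi hc hfree hnmem =>
          rename_i w j L'
          have hxz' : x ≠ z := Ne.symm hzx
          have hS₁ := upd_sym hS x z i γ
          have hD₁ := upd_dom mult hD γ hi (by rwa [hsm x z] at hi)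
          have hP₁ := upd_proper mult hP hxz' hi hγx hγz
          have hFan₁ : IsFan mult (upd C x z i γ) x y i₀ ((w, j) :: L') :=
            isFan_upd hfan hzx hnmem hγx
          have hcx : ¬ UsedAt mult (upd C x z i γ) x c := by
            rintro ⟨w', i', hlt, hceq⟩
            rcases upd_cases hceq with ⟨hpat, hji, hcγ⟩ | ⟨hpat, hold⟩
            · subst hcγ; exact hγx ⟨z, i, hi, hc⟩
            · obtain ⟨rfl, rfl⟩ := hP hlt hi hold hc
              exact hpat ⟨Or.inl ⟨rfl, rfl⟩, rfl⟩
          have hcw : ¬ UsedAt mult (upd C x z i γ) w c := by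
            rintro ⟨w', i', hlt, hceq⟩
            rcases upd_cases hceq with ⟨hpat, hji, hcγ⟩ | ⟨hpat, hold⟩
            · subst hcγ; exact hγx ⟨z, i, hi, hc⟩
            · exact hfree ⟨w', i', hlt, hold⟩
          obtain ⟨C', p1, p2, p3, p4, p5⟩ :=
            ih hS₁ hD₁ hP₁ hFan₁ rfl hcx hcw
          exact ⟨C', p1, p2, p3, fun a b jj h => p4 a b jj (upd_monotone h), p5⟩

/-! ### Kempe chain swap -/

variable (mult) in
def adjAB (α β : Fin k) (C : V → V → ℕ → Option (Fin k)) (v w : V) : Prop :=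
  ∃ i, i < mult v w ∧ (C v w i = some α ∨ C v w i = some β)

open Classical in
noncomputable def swapC (C : V → V → ℕ → Option (Fin k)) (R : V → Prop) (α β : Fin k) :
    V → V → ℕ → Option (Fin k) :=
  fun a b j => if R a ∨ R b then (C a b j).map (Equiv.swap α β) else C a b j

section Swap

variable {C : V → V → ℕ → Option (Fin k)} {α β : Fin k} {R : V → Prop}

lemma swap_none_iff {a b : V} {j : ℕ} : swapC C R α β a b j = none ↔ C a b j = none := by
  rw [swapC]
  split <;> simp

lemma swap_eq_of_R {a b : V} {j : ℕ} (h : R a ∨ R b) :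
    swapC C R α β a b j = (C a b j).map (Equiv.swap α β) := by
  rw [swapC, if_pos h]

/-- values of the swap when neither endpoint color is α/β -/
lemma swap_eq_keep {a b : V} {j : ℕ} {c : Fin k} (hc : C a b j = some c)
    (h1 : c ≠ α) (h2 : c ≠ β) : swapC C R α β a b j = some c := by
  rw [swapC]
  split
  · rw [hc, Option.map_some, Equiv.swap_apply_of_ne_of_ne h1 h2]
  · exact hc

variable (hcompat : ∀ v w, adjAB mult α β C v w → (R v ↔ R w))

include hcompat in
/-- for `v ∉ R` nothing at `v` changes -/
lemma swap_eq_of_notR {a b : V} {j : ℕ} (hj : j < mult a b) (ha : ¬ R a) :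
    swapC C R α β a b j = C a b j := by
  rw [swapC]
  split
  · rcases ‹R a ∨ R b› with h | hb
    · exact absurd h ha
    · cases hC : C a b j with
      | none => simp
      | some c =>
          rcases eq_or_ne c α with rfl | h1
          · exact absurd ((hcompat a b ⟨j, hj, Or.inl hC⟩).mpr hb) ha
          · rcases eq_or_ne c β with rfl | h2
            · exact absurd ((hcompat a b ⟨j, hj, Or.inr hC⟩).mpr hb) ha
            · rw [Option.map_some, Equiv.swap_apply_of_ne_of_ne h1 h2]
  · rfl

include hcompat in
lemma swap_used_of_R {v : V} (hv : R v) (c : Fin k) :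
    UsedAt mult (swapC C R α β) v c ↔ UsedAt mult C v (Equiv.swap α β c) := by
  constructor
  · rintro ⟨w, i, hi, hc⟩
    rw [swap_eq_of_R (Or.inl hv)] at hc
    cases hC : C v w i with
    | none => rw [hC] at hc; simp at hc
    | some d =>
        rw [hC, Option.map_some] at hc
        obtain rfl := Option.some_injective _ hc
        exact ⟨w, i, hi, by rw [hC, Equiv.swap_apply_self]⟩
  · rintro ⟨w, i, hi, hc⟩
    exact ⟨w, i, hi, by rw [swap_eq_of_R (Or.inl hv), hc, Option.map_some,
      Equiv.swap_apply_self]⟩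

include hcompat in
lemma swap_used_of_notR {v : V} (hv : ¬ R v) (c : Fin k) :
    UsedAt mult (swapC C R α β) v c ↔ UsedAt mult C v c := by
  constructor
  · rintro ⟨w, i, hi, hc⟩
    rw [swap_eq_of_notR hcompat hi hv] at hc
    exact ⟨w, i, hi, hc⟩
  · rintro ⟨w, i, hi, hc⟩
    exact ⟨w, i, hi, by rw [swap_eq_of_notR hcompat hi hv]; exact hc⟩

include hcompat in
lemma swap_proper (hP : CProper mult C) : CProper mult (swapC C R α β) := by
  intro v c w i w' i' hw hw' hc hc'
  by_cases hv : R v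
  · rw [swap_eq_of_R (Or.inl hv)] at hc hc'
    cases hC : C v w i with
    | none => rw [hC] at hc; simp at hc
    | some d =>
        cases hC' : C v w' i' with
        | none => rw [hC'] at hc'; simp at hc'
        | some d' =>
            rw [hC, Option.map_some] at hc
            rw [hC', Option.map_some] at hc'
            obtain rfl : d = d' := by
              have := (Option.some_injective _ hc).trans (Option.some_injective _ hc').symm
              exact (Equiv.swap α β).injective this
            exact hP hw hw' hC hC'
  · rw [swap_eq_of_notR hcompat hw hv] at hc
    rw [swap_eq_of_notR hcompat hw' hv] at hc'
    exact hP hw hw' hc hc'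

include hcompat in
lemma swap_sym (hsm : ∀ a b, mult a b = mult b a) (hS : CSym C) : CSym (swapC C R α β) := by
  intro a b j
  rw [swapC, swapC, hS]
  by_cases h : R a ∨ R b
  · rw [if_pos h, if_pos (Or.symm h)]
  · rw [if_neg h, if_neg (fun hh => h (Or.symm hh))]

lemma swap_dom (hD : CDom mult C) : CDom mult (swapC C R α β) := by
  intro a b j h
  refine hD a b j ?_
  rw [Ne, ← swap_none_iff (R := R) (α := α) (β := β)]
  exact h

end Swap

lemma isFan_swap {C : V → V → ℕ → Option (Fin k)} (hP : CProper mult C)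
    {x y : V} {i₀ : ℕ} {L : List (V × ℕ)} (hF : IsFan mult C x y i₀ L)
    {α β : Fin k} {R : V → Prop}
    (hcompat : ∀ v w, adjAB mult α β C v w → (R v ↔ R w))
    (hRx : R x) (hxβ : ¬ UsedAt mult C x β)
    (hjun : ∀ (P : List (V × ℕ)) (s b : V × ℕ) (T : List (V × ℕ)),
      L = P ++ s :: b :: T → C x s.1 s.2 = some α → R b.1) :
    IsFan mult (swapC C R α β) x y i₀ L := by
  induction hF with
  | base h0 h1 =>
      exact IsFan.base h0 (swap_none_iff.mpr h1)
  | cons c hfan hi hc hfree hnm ih =>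
      rename_i z' i' w j L0
      have ih' : IsFan mult (swapC C R α β) x y i₀ ((w, j) :: L0) := by
        apply ih
        intro P s b T hPT hcol
        exact hjun ((z', i') :: P) s b T (by rw [hPT]; rfl) hcol
      have hcβ : c ≠ β := by rintro rfl; exact hxβ ⟨z', i', hi, hc⟩
      rcases eq_or_ne c α with rfl | hcα
      · -- the α-slot: becomes β
        have hRw : R w := hjun [] (z', i') (w, j) L0 rfl hc
        refine IsFan.cons β ih' hi ?_ ?_ hnm
        · rw [swap_eq_of_R (Or.inl hRx), hc, Option.map_some, Equiv.swap_apply_left]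
        · rw [swap_used_of_R hcompat hRw, Equiv.swap_apply_right]
          exact hfree
      · refine IsFan.cons c ih' hi (swap_eq_keep hc hcα hcβ) ?_ hnm
        by_cases hRw : R w
        · rw [swap_used_of_R hcompat hRw, Equiv.swap_apply_of_ne_of_ne hcα hcβ]
          exact hfree
        · rw [swap_used_of_notR hcompat hRw]
          exact hfree

/-! ### the chain component cannot contain two far endpoints -/

lemma not_both (hsm : ∀ u v, mult u v = mult v u) (hL : ∀ u, mult u u = 0)
    {C : V → V → ℕ → Option (Fin k)} (hS : CSym C) (hP : CProper mult C)
    {α β : Fin k} {x a b : V}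
    (hax : a ≠ x) (hbx : b ≠ x) (hab : a ≠ b)
    (hxβ : ¬ UsedAt mult C x β) (haα : ¬ UsedAt mult C a α) (hbα : ¬ UsedAt mult C b α)
    (G : SimpleGraph V) (hG : ∀ v w, G.Adj v w ↔ adjAB mult α β C v w) :
    ¬ (G.Reachable x a ∧ G.Reachable x b) := by
  classical
  rintro ⟨hra, hrb⟩
  set R : Finset V := @Finset.filter _ (fun v => G.Reachable x v) (Classical.decPred _)
    Finset.univ with hR
  have hmemR : ∀ v, v ∈ R ↔ G.Reachable x v := by
    intro v; simp [hR]
  have hxR : x ∈ R := (hmemR x).mpr (SimpleGraph.Reachable.refl x)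
  have haR : a ∈ R := (hmemR a).mpr hra
  have hbR : b ∈ R := (hmemR b).mpr hrb
  -- the dd sets
  set dd : V → Finset (V × ℕ) := fun v => (slotsAt mult v).filter
    (fun s => C v s.1 s.2 = some α ∨ C v s.1 s.2 = some β) with hdd
  have hmemdd : ∀ v s, s ∈ dd v ↔ s.2 < mult v s.1 ∧
      (C v s.1 s.2 = some α ∨ C v s.1 s.2 = some β) := by
    intro v s
    simp [hdd, mem_slotsAt]
  have honecolor : ∀ (v : V) (c : Fin k) (s t : V × ℕ), s.2 < mult v s.1 → t.2 < mult v t.1 →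
      C v s.1 s.2 = some c → C v t.1 t.2 = some c → s = t := by
    intro v c s t hs ht hcs hct
    obtain ⟨h1, h2⟩ := hP hs ht hcs hct
    exact Prod.ext h1 h2
  have hcard2 : ∀ v, (dd v).card ≤ 2 := by
    intro v
    have : dd v = ((slotsAt mult v).filter (fun s => C v s.1 s.2 = some α)) ∪
        ((slotsAt mult v).filter (fun s => C v s.1 s.2 = some β)) := by
      simp only [hdd]
      rw [Finset.filter_or]
    rw [this]
    refine le_trans (Finset.card_union_le _ _) ?_
    have h1 : ((slotsAt mult v).filter (fun s => C v s.1 s.2 = some α)).card ≤ 1 := by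
      refine Finset.card_le_one.mpr ?_
      intro s hs t ht
      rw [Finset.mem_filter, mem_slotsAt] at hs ht
      exact honecolor v α s t hs.1 ht.1 hs.2 ht.2
    have h2 : ((slotsAt mult v).filter (fun s => C v s.1 s.2 = some β)).card ≤ 1 := by
      refine Finset.card_le_one.mpr ?_
      intro s hs t ht
      rw [Finset.mem_filter, mem_slotsAt] at hs ht
      exact honecolor v β s t hs.1 ht.1 hs.2 ht.2
    omega
  have hcard1 : ∀ v, ¬ UsedAt mult C v α → (dd v).card ≤ 1 := by
    intro v hv
    refine Finset.card_le_one.mpr ?_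
    intro s hs t ht
    rw [hmemdd] at hs ht
    have hsβ : C v s.1 s.2 = some β := by
      rcases hs.2 with h | h
      · exact absurd ⟨s.1, s.2, hs.1, h⟩ hv
      · exact h
    have htβ : C v t.1 t.2 = some β := by
      rcases ht.2 with h | h
      · exact absurd ⟨t.1, t.2, ht.1, h⟩ hv
      · exact h
    exact honecolor v β s t hs.1 ht.1 hsβ htβ
  have hcard1x : (dd x).card ≤ 1 := by
    refine Finset.card_le_one.mpr ?_
    intro s hs t ht
    rw [hmemdd] at hs ht
    have hsα : C x s.1 s.2 = some α := by
      rcases hs.2 with h | h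
      · exact h
      · exact absurd ⟨s.1, s.2, hs.1, h⟩ hxβ
    have htα : C x t.1 t.2 = some α := by
      rcases ht.2 with h | h
      · exact h
      · exact absurd ⟨t.1, t.2, ht.1, h⟩ hxβ
    exact honecolor x α s t hs.1 ht.1 hsα htα
  -- parent construction
  have hparent : ∀ v, v ∈ R.erase x → ∃ u m, G.Adj v u ∧ G.dist x u < G.dist x v ∧
      m < mult v u ∧ (C v u m = some α ∨ C v u m = some β) := by
    intro v hv
    obtain ⟨hne, hvR⟩ := Finset.mem_erase.mp hv
    have hr : G.Reachable x v := (hmemR v).mp hvR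
    obtain ⟨W, hW⟩ := (hr.symm).exists_walk_length_eq_dist
    cases W with
    | nil => exact absurd rfl hne
    | cons hadj W' =>
        rename_i u
        have h1 : G.dist x u ≤ W'.reverse.length := SimpleGraph.dist_le _
        rw [SimpleGraph.Walk.length_reverse] at h1
        have h2 : W'.length + 1 = G.dist v x := by simpa using hW
        rw [SimpleGraph.dist_comm] at h2
        obtain ⟨m, hm, hcol⟩ := (hG v u).mp hadj
        exact ⟨u, m, hadj, by omega, hm, hcol⟩
  choose pu pm hpadj hpdist hpm hpcol using hparent
  -- the big finset A and the injection
  set A : Finset (V × (V × ℕ)) := R.biUnion (fun v => ({v} : Finset V) ×ˢ dd v) with hA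
  have hcardA : A.card = ∑ v ∈ R, (dd v).card := by
    rw [hA, Finset.card_biUnion]
    · refine Finset.sum_congr rfl fun v _ => by simp
    · intro u _ v _ huv
      simp only [Finset.disjoint_left]
      rintro ⟨w, s⟩ h1 h2
      simp only [Finset.mem_product, Finset.mem_singleton] at h1 h2
      exact huv (h1.1.symm.trans h2.1)
  have hmemA : ∀ t : V × (V × ℕ), t ∈ A ↔ t.1 ∈ R ∧ t.2 ∈ dd t.1 := by
    rintro ⟨t1, t2⟩
    rw [hA, Finset.mem_biUnion]
    constructor
    · rintro ⟨v, hvR, ht⟩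
      rw [Finset.mem_product] at ht
      obtain ⟨h1, h2⟩ := ht
      rw [Finset.mem_singleton] at h1
      subst h1
      exact ⟨hvR, h2⟩
    · rintro ⟨h1, h2⟩
      exact ⟨t1, h1, Finset.mem_product.mpr ⟨Finset.mem_singleton_self _, h2⟩⟩
  -- the injection from (R.erase x) × Bool
  set D : Finset (V × Bool) := (R.erase x) ×ˢ (Finset.univ : Finset Bool) with hD
  set Φ : V × Bool → V × (V × ℕ) := fun q =>
    if h : q.1 ∈ R.erase x then
      (cond q.2 (q.1, (pu q.1 h, pm q.1 h)) (pu q.1 h, (q.1, pm q.1 h)))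
    else (x, (x, 0)) with hΦ
  have hDcard : D.card = 2 * (R.card - 1) := by
    rw [hD, Finset.card_product, Finset.card_erase_of_mem hxR]
    simp [Finset.card_univ, mul_comm]
  have hmaps : ∀ q ∈ D, Φ q ∈ A := by
    rintro ⟨v, t⟩ hq
    have hv : v ∈ R.erase x := (Finset.mem_product.mp hq).1
    have hvR : v ∈ R := Finset.mem_of_mem_erase hv
    have hpuR : pu v hv ∈ R := by
      rw [hmemR]
      exact ((hmemR v).mp hvR).trans (hpadj v hv).reachable
    rw [hΦ]
    simp only [dif_pos hv]
    cases t
    · -- false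
      rw [Bool.cond_false, hmemA]
      refine ⟨hpuR, ?_⟩
      rw [hmemdd]
      constructor
      · rw [hsm]; exact hpm v hv
      · rcases hpcol v hv with h | h
        · left; rw [← hS]; exact h
        · right; rw [← hS]; exact h
    · rw [Bool.cond_true, hmemA]
      exact ⟨hvR, (hmemdd _ _).mpr ⟨hpm v hv, hpcol v hv⟩⟩
  have hinj : Set.InjOn Φ D := by
    rintro ⟨v, t⟩ hq ⟨v', t'⟩ hq' heq
    have hv : v ∈ R.erase x := (Finset.mem_product.mp (Finset.mem_coe.mp hq)).1
    have hv' : v' ∈ R.erase x := (Finset.mem_product.mp (Finset.mem_coe.mp hq')).1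
    rw [hΦ] at heq
    simp only [dif_pos hv, dif_pos hv'] at heq
    cases t <;> cases t' <;>
      simp only [Bool.cond_false, Bool.cond_true] at heq
    · -- both false
      have h2 : v = v' := congrArg (fun z => z.2.1) heq
      rw [h2]
    · -- false, true : (pu v, (v, m)) = (v', (pu v', m'))
      exfalso
      have h1 : pu v hv = v' := congrArg Prod.fst heq
      have h2 : v = pu v' hv' := congrArg (fun z => z.2.1) heq
      have d1 := hpdist v hv
      have d2 := hpdist v' hv'
      rw [h1] at d1
      rw [← h2] at d2
      omega
    · exfalso
      have h1 : v = pu v' hv' := congrArg Prod.fst heq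
      have h2 : pu v hv = v' := congrArg (fun z => z.2.1) heq
      have d1 := hpdist v hv
      have d2 := hpdist v' hv'
      rw [h2] at d1
      rw [← h1] at d2
      omega
    · have h1 : v = v' := congrArg Prod.fst heq
      rw [h1]
  have hle : D.card ≤ A.card := Finset.card_le_card_of_injOn Φ hmaps hinj
  -- upper bound for the sum
  have hsum : ∑ v ∈ R, (dd v).card ≤ ∑ v ∈ R, (if v = x ∨ v = a ∨ v = b then 1 else 2) := by
    refine Finset.sum_le_sum ?_
    intro v hv
    by_cases h : v = x ∨ v = a ∨ v = b
    · rw [if_pos h]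
      rcases h with rfl | rfl | rfl
      · exact hcard1x
      · exact hcard1 v haα
      · exact hcard1 v hbα
    · rw [if_neg h]
      exact hcard2 v
  have hxabR : ({x, a, b} : Finset V) ⊆ R := by
    intro v hv
    simp only [Finset.mem_insert, Finset.mem_singleton] at hv
    rcases hv with rfl | rfl | rfl
    · exact hxR
    · exact haR
    · exact hbR
  have hcardxab : ({x, a, b} : Finset V).card = 3 := by
    rw [Finset.card_insert_of_notMem (by simp [hax.symm, hbx.symm]),
      Finset.card_insert_of_notMem (by simp [hab]), Finset.card_singleton]
  have hR3 : 3 ≤ R.card := hcardxab ▸ Finset.card_le_card hxabR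
  have hfeq : R.filter (fun v => v = x ∨ v = a ∨ v = b) = {x, a, b} := by
    ext v
    simp only [Finset.mem_filter, Finset.mem_insert, Finset.mem_singleton]
    constructor
    · rintro ⟨-, h⟩; exact h
    · intro h
      exact ⟨hxabR (by simpa using h), h⟩
  have hrhs : ∑ v ∈ R, (if v = x ∨ v = a ∨ v = b then 1 else 2) = 2 * R.card - 3 := by
    rw [Finset.sum_ite, Finset.sum_const, Finset.sum_const, hfeq, hcardxab]
    have h2 : 3 + (R.filter (fun v => ¬(v = x ∨ v = a ∨ v = b))).card = R.card := by
      rw [← hcardxab, ← hfeq]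
      exact Finset.card_filter_add_card_filter_not _
    simp only [smul_eq_mul]
    omega
  rw [hcardA] at hle
  omega

/-! ### helper lemmas for the main extension argument -/

lemma fan_length_le {C : V → V → ℕ → Option (Fin k)} {x y : V} {i₀ : ℕ} {L : List (V × ℕ)}
    (hF : IsFan mult C x y i₀ L) (hdx : ∑ w, mult x w ≤ k) : L.length ≤ k := by
  have hnd := hF.nodup
  have hsub : L.toFinset ⊆ slotsAt mult x := by
    intro s hs
    rw [List.mem_toFinset] at hs
    exact (mem_slotsAt mult).mpr (hF.mem_lt s hs)
  calc L.length = L.toFinset.card := (List.toFinset_card_of_nodup hnd).symm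
    _ ≤ (slotsAt mult x).card := Finset.card_le_card hsub
    _ = ∑ w, mult x w := card_slotsAt mult x
    _ ≤ k := hdx

lemma fan_decomp {C : V → V → ℕ → Option (Fin k)} {x y : V} {i₀ : ℕ} {L : List (V × ℕ)}
    (hF : IsFan mult C x y i₀ L) {s : V × ℕ} {c : Fin k}
    (hmem : s ∈ L) (hcol : C x s.1 s.2 = some c) :
    ∃ P b T, L = P ++ s :: b :: T ∧ ¬ UsedAt mult C b.1 c := by
  obtain ⟨P, T, hPT⟩ := List.append_of_mem hmem
  rcases T with - | ⟨b, T⟩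
  · exfalso
    have hlast := hF.getLast
    rw [hPT, List.getLast?_concat] at hlast
    obtain rfl : s = (y, i₀) := Option.some_injective _ hlast
    rw [hF.base_none] at hcol
    cases hcol
  · obtain ⟨c', hc', hfree⟩ := hF.junction hPT
    obtain rfl : c' = c := by
      rw [hcol] at hc'
      exact (Option.some_injective _ hc').symm
    exact ⟨P, b, T, hPT, hfree⟩

/-! ### the main extension lemma -/

lemma extend (hsm : ∀ u v, mult u v = mult v u) (hLp : ∀ u, mult u u = 0)
    (hmp : ∀ u v, mult u v ≤ p)
    {C : V → V → ℕ → Option (Fin k)} (hS : CSym C) (hD : CDom mult C) (hP : CProper mult C)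
    {x y : V} {i₀ : ℕ} (hi₀ : i₀ < mult x y) (hnone : C x y i₀ = none)
    (hdx : ∑ w, mult x w ≤ k)
    (hnb : ∀ z, 0 < mult x z → ∑ w, mult z w + p ≤ k) :
    ∃ C' : V → V → ℕ → Option (Fin k), CSym C' ∧ CDom mult C' ∧ CProper mult C' ∧
      (∀ a b j, C a b j ≠ none → C' a b j ≠ none) ∧ C' x y i₀ ≠ none := by
  classical
  -- a free color at x
  obtain ⟨β, hβx⟩ : ∃ β : Fin k, ¬ UsedAt mult C x β := by
    apply exists_free
    have h1 := coloredAt_card_lt (mult := mult) (C := C) hi₀ hnone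
    omega
  have aux : ∀ (n : ℕ) (L : List (V × ℕ)) (z : V) (i : ℕ),
      L.head? = some (z, i) → IsFan mult C x y i₀ L → k + 1 ≤ L.length + n →
      ∃ C' : V → V → ℕ → Option (Fin k), CSym C' ∧ CDom mult C' ∧ CProper mult C' ∧
        (∀ a b j, C a b j ≠ none → C' a b j ≠ none) ∧ C' x y i₀ ≠ none := by
    intro n
    induction n with
    | zero =>
        intro L z i hh hF hlen
        have := fan_length_le hF hdx
        omega
    | succ n ih =>
        rintro L z i hh hF hlen
        rcases L with - | ⟨hd, tl⟩
        · simp at hh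
        have hhd : hd = (z, i) := by simpa using hh
        subst hhd
        have hmemz : (z, i) ∈ (z, i) :: tl := List.mem_cons_self
        have hiz : i < mult x z := hF.mem_lt _ hmemz
        have hzpos : 0 < mult x z := by omega
        have hzx : z ≠ x := by
          intro he
          rw [he, hLp] at hiz
          omega
        by_cases hc1 : ∃ γ, ¬ UsedAt mult C x γ ∧ ¬ UsedAt mult C z γ
        · obtain ⟨γ, h1, h2⟩ := hc1
          exact rotate hsm hLp _ hS hD hP hF hh h1 h2
        push_neg at hc1
        by_cases hc2 : ∃ (c : Fin k) (s : V × ℕ), ¬ UsedAt mult C z c ∧ s.2 < mult x s.1 ∧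
            C x s.1 s.2 = some c ∧ s ∉ (z, i) :: tl
        · obtain ⟨c, ⟨w', i'⟩, hcz, hlt, hcol, hnmL⟩ := hc2
          have hF' : IsFan mult C x y i₀ ((w', i') :: (z, i) :: tl) :=
            IsFan.cons c hF hlt hcol hcz hnmL
          refine ih ((w', i') :: (z, i) :: tl) w' i' rfl hF' ?_
          simp only [List.length_cons] at hlen ⊢
          omega
        push_neg at hc2
        -- free colors at z
        set FZ : Finset (Fin k) := Finset.univ \ usedSet mult C z with hFZ
        have hFZmem : ∀ c, c ∈ FZ ↔ ¬ UsedAt mult C z c := by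
          intro c
          rw [hFZ, Finset.mem_sdiff, mem_usedSet]
          simp
        have hFZcard : p ≤ FZ.card := by
          have h1 := freeSet_card (mult := mult) (C := C) (v := z)
          rw [← hFZ] at h1
          have h2 := coloredAt_card_le mult C z
          have h3 := hnb z hzpos
          omega
        have hchoice : ∀ c ∈ FZ, ∃ (P : List (V × ℕ)) (ss bb : V × ℕ) (T : List (V × ℕ)),
            (z, i) :: tl = P ++ ss :: bb :: T ∧ C x ss.1 ss.2 = some c ∧
            ¬ UsedAt mult C bb.1 c := by
          intro c hc
          have hcz : ¬ UsedAt mult C z c := (hFZmem c).mp hc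
          have hcx : UsedAt mult C x c := by
            by_contra h
            exact hcz (hc1 c h)
          obtain ⟨w', i', hlt, hcol⟩ := hcx
          have hmem : (w', i') ∈ (z, i) :: tl := hc2 c (w', i') hcz hlt hcol
          obtain ⟨P, b, T, heq, hfree⟩ := fan_decomp hF hmem hcol
          exact ⟨P, (w', i'), b, T, heq, hcol, hfree⟩
        choose Pf sf bf Tf hLeq hscol hbfree using hchoice
        have hnd : ((z, i) :: tl).Nodup := hF.nodup
        have hbftl : ∀ c (hc : c ∈ FZ), bf c hc ∈ tl := by
          intro c hc
          have heq := hLeq c hc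
          cases hp : Pf c hc with
          | nil =>
              rw [hp, List.nil_append] at heq
              have h2 : tl = bf c hc :: Tf c hc := (List.cons.injEq _ _ _ _ ▸ heq).2
              rw [h2]
              exact List.mem_cons_self
          | cons q P' =>
              rw [hp, List.cons_append] at heq
              have h2 : tl = P' ++ sf c hc :: bf c hc :: Tf c hc :=
                (List.cons.injEq _ _ _ _ ▸ heq).2
              rw [h2]
              simp
        have hsfmem : ∀ c (hc : c ∈ FZ), sf c hc ∈ (z, i) :: tl := by
          intro c hc
          rw [hLeq c hc]
          simp
        by_cases hbad : ∀ c (hc : c ∈ FZ), (bf c hc).1 = z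
        · -- too many parallel edges to z
          exfalso
          set T : Finset (V × ℕ) := ((z, i) :: tl).toFinset.filter (fun s => s.1 = z) with hT
          have hTcard : T.card ≤ mult x z := by
            have : T.card ≤ (Finset.range (mult x z)).card := by
              apply Finset.card_le_card_of_injOn (fun s => s.2)
              · intro s hs
                rw [Finset.mem_coe, Finset.mem_filter, List.mem_toFinset] at hs
                rw [Finset.mem_coe, Finset.mem_range, ← hs.2]
                exact hF.mem_lt s hs.1
              · intro s hs t ht hst
                rw [Finset.mem_coe, hT, Finset.mem_filter] at hs ht
                exact Prod.ext (hs.2.trans ht.2.symm) hst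
            rwa [Finset.card_range] at this
          have hheadT : (z, i) ∈ T := by
            rw [hT, Finset.mem_filter, List.mem_toFinset]
            exact ⟨hmemz, rfl⟩
          have hcardle : FZ.card ≤ (T.erase (z, i)).card := by
            apply Finset.card_le_card_of_injOn
              (fun c => if hc : c ∈ FZ then bf c hc else (z, i))
            · intro c hc
              rw [Finset.mem_coe] at hc ⊢
              beta_reduce
              rw [dif_pos hc, Finset.mem_erase]
              constructor
              · intro he
                have := hbftl c hc
                rw [he] at this
                exact (List.nodup_cons.mp hnd).1 this
              · rw [hT, Finset.mem_filter, List.mem_toFinset]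
                exact ⟨List.mem_cons_of_mem _ (hbftl c hc), hbad c hc⟩
            · intro c hc c' hc' heq
              rw [Finset.mem_coe] at hc hc'
              simp only [dif_pos hc, dif_pos hc'] at heq
              -- same successor forces same predecessor
              have e1 : (z, i) :: tl = (Pf c hc ++ [sf c hc]) ++ bf c hc :: Tf c hc := by
                rw [hLeq c hc]
                simp
              have e2 : (z, i) :: tl = (Pf c' hc' ++ [sf c' hc']) ++ bf c hc :: Tf c' hc' := by
                rw [hLeq c' hc', heq]
                simp
              obtain ⟨hpre, -⟩ := nodup_split_unique (e1 ▸ hnd) (e1.symm.trans e2)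
              have hsfeq : sf c hc = sf c' hc' := by
                have h1 : (Pf c hc ++ [sf c hc]).getLast? = some (sf c hc) :=
                  List.getLast?_concat
                rw [hpre, List.getLast?_concat] at h1
                exact (Option.some_injective _ h1).symm
              have := hscol c hc
              rw [hsfeq, hscol c' hc'] at this
              exact (Option.some_injective _ this).symm
            
          have h1 := Finset.card_erase_of_mem hheadT
          have h2 := hmp x z
          omega
        · push_neg at hbad
          obtain ⟨α, hαFZ, hbneq⟩ := hbad
          have haα : ¬ UsedAt mult C (bf α hαFZ).1 α := hbfree α hαFZ
          have hαz : ¬ UsedAt mult C z α := (hFZmem α).mp hαFZ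
          have hsαmem : sf α hαFZ ∈ (z, i) :: tl := hsfmem α hαFZ
          have hsαlt : (sf α hαFZ).2 < mult x (sf α hαFZ).1 := hF.mem_lt _ hsαmem
          have hxα : UsedAt mult C x α :=
            ⟨(sf α hαFZ).1, (sf α hαFZ).2, hsαlt, hscol α hαFZ⟩
          have hαβ : α ≠ β := by rintro rfl; exact hβx hxα
          have hbmem : bf α hαFZ ∈ (z, i) :: tl := List.mem_cons_of_mem _ (hbftl α hαFZ)
          have hax : (bf α hαFZ).1 ≠ x := by
            intro he
            have hblt := hF.mem_lt _ hbmem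
            rw [he, hLp] at hblt
            omega
          have hLsplit : (z, i) :: tl =
              (Pf α hαFZ ++ [sf α hαFZ]) ++ bf α hαFZ :: Tf α hαFZ := by
            rw [hLeq α hαFZ]
            simp
          have hsuf : IsFan mult C x y i₀ (bf α hαFZ :: Tf α hαFZ) :=
            IsFan.suffix (by rw [← hLsplit]; exact hF) (by simp)
          have hsαnsuf : sf α hαFZ ∉ bf α hαFZ :: Tf α hαFZ := by
            have hnd2 := hnd
            rw [hLsplit] at hnd2
            have hdisj := List.disjoint_of_nodup_append hnd2
            exact fun hmem => hdisj (by simp) hmem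
          by_cases hβa : UsedAt mult C (bf α hαFZ).1 β
          · -- Kempe chain case
            have hGsymm : Symmetric (adjAB mult α β C) := by
              rintro v w ⟨m, hm, hcol⟩
              refine ⟨m, by rwa [hsm w v], ?_⟩
              rcases hcol with h | h
              · left; rwa [hS w v]
              · right; rwa [hS w v]
            have hGirr : ∀ v : V, ¬ adjAB mult α β C v v := by
              rintro v ⟨m, hm, -⟩
              rw [hLp] at hm
              omega
            let G : SimpleGraph V := ⟨adjAB mult α β C, ⟨fun a b h => hGsymm h⟩, ⟨fun v h => hGirr v h⟩⟩
            have hG : ∀ v w, G.Adj v w ↔ adjAB mult α β C v w := fun _ _ => Iff.rfl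
            set Rp : V → Prop := fun v => G.Reachable x v with hRp
            have hcompat : ∀ v w, adjAB mult α β C v w → (Rp v ↔ Rp w) := by
              intro v w hvw
              constructor
              · intro h
                exact h.trans ((hG v w).mpr hvw).reachable
              · intro h
                exact h.trans ((hG w v).mpr (hGsymm hvw)).reachable
            have hRx : Rp x := SimpleGraph.Reachable.refl x
            have hxα₁ : ¬ UsedAt mult (swapC C Rp α β) x α := by
              rw [swap_used_of_R hcompat hRx, Equiv.swap_apply_left]
              exact hβx
            have hS₁ : CSym (swapC C Rp α β) := swap_sym hcompat hsm hS
            have hD₁ : CDom mult (swapC C Rp α β) := swap_dom (R := Rp) (α := α) (β := β) hD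
            have hP₁ : CProper mult (swapC C Rp α β) := swap_proper hcompat hP
            have hnb2 := not_both hsm hLp hS hP hax hzx hbneq hβx haα hαz G hG
            by_cases hra : Rp (bf α hαFZ).1
            · -- whole fan survives the swap
              have hrz : ¬ Rp z := fun h => hnb2 ⟨hra, h⟩
              have hjun : ∀ (P : List (V × ℕ)) (s bb : V × ℕ) (T : List (V × ℕ)),
                  (z, i) :: tl = P ++ s :: bb :: T → C x s.1 s.2 = some α → Rp bb.1 := by
                intro P s bb T heq hcolα
                have hsmem : s ∈ (z, i) :: tl := by rw [heq]; simp
                have hslt := hF.mem_lt s hsmem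
                have hseq : s = sf α hαFZ := by
                  obtain ⟨h1, h2⟩ := hP hslt hsαlt hcolα (hscol α hαFZ)
                  exact Prod.ext h1 h2
                rw [hseq] at heq
                have hnd2 := hnd
                rw [heq] at hnd2
                obtain ⟨-, htails⟩ := nodup_split_unique hnd2 (heq.symm.trans (hLeq α hαFZ))
                have : bb = bf α hαFZ := (List.cons.injEq _ _ _ _ ▸ htails).1
                rw [this]
                exact hra
              have hFan₁ := isFan_swap hP hF hcompat hRx hβx hjun
              have hzα₁ : ¬ UsedAt mult (swapC C Rp α β) z α := by
                rw [swap_used_of_notR hcompat hrz]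
                exact hαz
              obtain ⟨C', q1, q2, q3, q4, q5⟩ :=
                rotate hsm hLp _ hS₁ hD₁ hP₁ hFan₁ rfl hxα₁ hzα₁
              refine ⟨C', q1, q2, q3, ?_, q5⟩
              intro aa bb jj hne
              apply q4
              rw [Ne, swap_none_iff]
              exact hne
            · -- only the suffix is needed
              have hjun : ∀ (P : List (V × ℕ)) (s bb : V × ℕ) (T : List (V × ℕ)),
                  bf α hαFZ :: Tf α hαFZ = P ++ s :: bb :: T →
                  C x s.1 s.2 = some α → Rp bb.1 := by
                intro P s bb T heq hcolα
                exfalso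
                have hsmem' : s ∈ bf α hαFZ :: Tf α hαFZ := by rw [heq]; simp
                have hsmem : s ∈ (z, i) :: tl := by
                  rw [hLsplit]
                  exact List.mem_append_right _ hsmem'
                have hslt := hF.mem_lt s hsmem
                have hseq : s = sf α hαFZ := by
                  obtain ⟨h1, h2⟩ := hP hslt hsαlt hcolα (hscol α hαFZ)
                  exact Prod.ext h1 h2
                exact hsαnsuf (hseq ▸ hsmem')
              have hFan₁ := isFan_swap hP hsuf hcompat hRx hβx hjun
              have haα₁ : ¬ UsedAt mult (swapC C Rp α β) (bf α hαFZ).1 α := by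
                rw [swap_used_of_notR hcompat hra]
                exact haα
              obtain ⟨C', q1, q2, q3, q4, q5⟩ :=
                rotate hsm hLp _ hS₁ hD₁ hP₁ (z := (bf α hαFZ).1) (i := (bf α hαFZ).2) hFan₁ (by simp) hxα₁ haα₁
              refine ⟨C', q1, q2, q3, ?_, q5⟩
              intro aa bb jj hne
              apply q4
              rw [Ne, swap_none_iff]
              exact hne
          · -- β is free at the junction vertex: rotate the suffix directly
            exact rotate hsm hLp _ hS hD hP (z := (bf α hαFZ).1) (i := (bf α hαFZ).2) hsuf (by simp) hβx hβa
  exact aux (k + 1) [(y, i₀)] y i₀ rfl (IsFan.base hi₀ hnone) (by simp)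

/-! ### driver: color all uncolored slots -/

variable (mult) in
def UC (p : ℕ) (C : V → V → ℕ → Option (Fin k)) : Finset ((V × V) × ℕ) :=
  ((Finset.univ : Finset (V × V)) ×ˢ Finset.range p).filter
    (fun t => t.2 < mult t.1.1 t.1.2 ∧ C t.1.1 t.1.2 t.2 = none)

lemma mem_UC (hmp : ∀ u v, mult u v ≤ p) {C : V → V → ℕ → Option (Fin k)}
    {t : (V × V) × ℕ} : t ∈ UC mult p C ↔ t.2 < mult t.1.1 t.1.2 ∧
      C t.1.1 t.1.2 t.2 = none := by
  rw [UC, Finset.mem_filter]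
  constructor
  · rintro ⟨-, h⟩; exact h
  · intro h
    refine ⟨?_, h⟩
    rw [Finset.mem_product, Finset.mem_range]
    exact ⟨Finset.mem_univ _, lt_of_lt_of_le h.1 (hmp _ _)⟩

lemma color_all (hsm : ∀ u v, mult u v = mult v u) (hLp : ∀ u, mult u u = 0)
    (hmp : ∀ u v, mult u v ≤ p) (U : Set V)
    (hdeg : ∀ v, ∑ w, mult v w ≤ k)
    (hU : ∀ z u, u ∈ U → 0 < mult z u → ∑ w, mult z w + p ≤ k) :
    ∀ (N : ℕ) (C : V → V → ℕ → Option (Fin k)), CSym C → CDom mult C → CProper mult C →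
      (∀ a b j, j < mult a b → C a b j = none → a ∈ U ∨ b ∈ U) →
      (UC mult p C).card ≤ N →
      ∃ C' : V → V → ℕ → Option (Fin k), CSym C' ∧ CDom mult C' ∧ CProper mult C' ∧
        (∀ a b j, j < mult a b → C' a b j ≠ none) := by
  intro N
  induction N with
  | zero =>
      intro C hS hD hP hinv hcard
      refine ⟨C, hS, hD, hP, ?_⟩
      intro a b j hj
      by_contra h
      have : ((a, b), j) ∈ UC mult p C := (mem_UC hmp).mpr ⟨hj, h⟩
      have := Finset.card_pos.mpr ⟨_, this⟩
      omega
  | succ N ih =>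
      intro C hS hD hP hinv hcard
      rcases Finset.eq_empty_or_nonempty (UC mult p C) with he | ⟨⟨⟨v, w⟩, j⟩, ht⟩
      · refine ⟨C, hS, hD, hP, ?_⟩
        intro a b j hj
        by_contra h
        have : ((a, b), j) ∈ UC mult p C := (mem_UC hmp).mpr ⟨hj, h⟩
        rw [he] at this
        exact absurd this (Finset.notMem_empty _)
      · obtain ⟨hj, hnone⟩ := (mem_UC hmp).mp ht
        simp only at hj hnone
        have hstep : ∃ C' : V → V → ℕ → Option (Fin k), CSym C' ∧ CDom mult C' ∧
            CProper mult C' ∧ (∀ a b j, C a b j ≠ none → C' a b j ≠ none) ∧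
            C' v w j ≠ none := by
          rcases hinv v w j hj hnone with hvU | hwU
          · exact extend hsm hLp hmp hS hD hP hj hnone (hdeg v)
              (fun zz hz => hU zz v hvU (by rwa [hsm zz v]))
          · obtain ⟨C', p1, p2, p3, p4, p5⟩ := extend hsm hLp hmp hS hD hP
              (x := w) (y := v) (by rwa [hsm v w] at hj) (by rwa [hS v w] at hnone)
              (hdeg w) (fun zz hz => hU zz w hwU (by rwa [hsm zz w]))
            refine ⟨C', p1, p2, p3, p4, ?_⟩
            rwa [p1 v w]
        obtain ⟨C', p1, p2, p3, p4, p5⟩ := hstep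
        refine ih C' p1 p2 p3 ?_ ?_
        · intro a b jj hjj hn
          refine hinv a b jj hjj ?_
          by_contra hcn
          exact (p4 a b jj hcn) hn
        · have hsub : UC mult p C' ⊆ (UC mult p C).erase ((v, w), j) := by
            intro t htm
            obtain ⟨h1, h2⟩ := (mem_UC hmp).mp htm
            refine Finset.mem_erase.mpr ⟨?_, (mem_UC hmp).mpr ⟨h1, ?_⟩⟩
            · rintro rfl
              exact p5 h2
            · by_contra hcn
              exact (p4 _ _ _ hcn) h2
          have h1 := Finset.card_le_card hsub
          have h2 := Finset.card_erase_of_mem ht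
          have h3 := Finset.card_pos.mpr ⟨_, ht⟩
          omega

/-! ### from matchings to a coloring -/

lemma init_coloring {mult' : V → V → ℕ} (hle : ∀ a b, mult' a b ≤ mult a b)
    (M : Fin k → V → V → ℕ)
    (hM1 : ∀ c a b, M c a b = M c b a)
    (hM2 : ∀ c a, ∑ b, M c a b ≤ 1)
    (hM3 : ∀ a b, ∑ c, M c a b = mult' a b) :
    ∃ C : V → V → ℕ → Option (Fin k), CSym C ∧ CDom mult C ∧ CProper mult C ∧
      (∀ a b j, j < mult' a b → C a b j ≠ none) := by
  classical
  have hM01 : ∀ c a b, M c a b ≤ 1 := by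
    intro c a b
    have h1 : M c a b ≤ ∑ b', M c a b' :=
      Finset.single_le_sum (f := fun b' => M c a b') (fun _ _ => Nat.zero_le _)
        (Finset.mem_univ b)
    exact le_trans h1 (hM2 c a)
  set S : V → V → Finset (Fin k) := fun a b => Finset.univ.filter (fun c => M c a b = 1)
    with hs
  have hScard : ∀ a b, (S a b).card = mult' a b := by
    intro a b
    rw [hs]
    rw [Finset.card_filter]
    rw [← hM3 a b]
    refine Finset.sum_congr rfl fun c _ => ?_
    have := hM01 c a b
    interval_cases h : M c a b <;> simp [h]
  have hSsym : ∀ a b, S a b = S b a := by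
    intro a b
    rw [hs]
    refine Finset.filter_congr fun c _ => by rw [hM1]
  refine ⟨fun a b j => ((S a b).sort (· ≤ ·))[j]?, ?_, ?_, ?_, ?_⟩
  · intro a b j
    show ((S a b).sort (· ≤ ·))[j]? = ((S b a).sort (· ≤ ·))[j]?
    rw [hSsym a b]
  · intro a b j hne
    rcases h : ((S a b).sort (· ≤ ·))[j]? with - | c
    · exact absurd h hne
    · have := List.getElem?_eq_some_iff.mp h
      obtain ⟨hlt, -⟩ := this
      rw [Finset.length_sort] at hlt
      rw [hScard] at hlt
      exact lt_of_lt_of_le hlt (hle a b)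
  · intro v c w i w' i' hw hw' hc hc'
    have hmem : ∀ {b : V} {jj : ℕ}, ((S v b).sort (· ≤ ·))[jj]? = some c → M c v b = 1 := by
      intro b jj h
      have h2 := List.mem_of_getElem? h
      rw [Finset.mem_sort] at h2
      rw [hs] at h2
      exact (Finset.mem_filter.mp h2).2
    have h1 := hmem hc
    have h2 := hmem hc'
    have hww : w = w' := by
      by_contra hne
      have ha1 : (2 : ℕ) = ∑ b ∈ ({w, w'} : Finset V), M c v b := by
        rw [Finset.sum_insert (by simpa using hne), Finset.sum_singleton, h1, h2]
      have ha2 : ∑ b ∈ ({w, w'} : Finset V), M c v b ≤ ∑ b, M c v b :=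
        Finset.sum_le_sum_of_subset (Finset.subset_univ _)
      have ha3 := hM2 c v
      omega
    subst hww
    refine ⟨rfl, ?_⟩
    have hlen : i < ((S v w).sort (· ≤ ·)).length := (List.getElem?_eq_some_iff.mp hc).1
    exact (List.getElem?_inj hlen (Finset.sort_nodup _ _)).mp (hc.trans hc'.symm)
  · intro a b j hj
    have hlen : j < ((S a b).sort (· ≤ ·)).length := by
      rw [Finset.length_sort, hScard]
      exact hj
    show ((S a b).sort (· ≤ ·))[j]? ≠ none
    rw [List.getElem?_eq_getElem hlen]
    simp

/-! ### from a total coloring to matchings -/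

lemma final_matchings (hsm : ∀ u v, mult u v = mult v u) (c₀ : Fin k)
    {C : V → V → ℕ → Option (Fin k)} (hS : CSym C) (hP : CProper mult C)
    (hall : ∀ a b j, j < mult a b → C a b j ≠ none) :
    ∃ Mf : Fin k → V → V → ℕ, (∀ c a b, Mf c a b = Mf c b a) ∧
      (∀ c a, ∑ b, Mf c a b ≤ 1) ∧ (∀ a b, ∑ c, Mf c a b = mult a b) := by
  classical
  refine ⟨fun c a b => ((Finset.range (mult a b)).filter (fun i => C a b i = some c)).card,
    ?_, ?_, ?_⟩
  · intro c a b
    show ((Finset.range (mult a b)).filter (fun i => C a b i = some c)).card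
      = ((Finset.range (mult b a)).filter (fun i => C b a i = some c)).card
    rw [hsm a b]
    congr 1
    exact Finset.filter_congr fun i _ => by rw [hS a b]
  · intro c a
    -- the set of colored slots at a with color c has at most one element
    have key : (Finset.univ.biUnion (fun b => ({b} : Finset V) ×ˢ
        ((Finset.range (mult a b)).filter (fun i => C a b i = some c)))).card ≤ 1 := by
      refine Finset.card_le_one.mpr ?_
      rintro ⟨b, i⟩ h1 ⟨b', i'⟩ h2
      simp only [Finset.mem_biUnion, Finset.mem_product, Finset.mem_singleton,
        Finset.mem_filter, Finset.mem_range] at h1 h2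
      obtain ⟨bb, -, ⟨rfl, hi, hcol⟩⟩ := h1
      obtain ⟨bb', -, ⟨rfl, hi', hcol'⟩⟩ := h2
      obtain ⟨rfl, rfl⟩ := hP hi hi' hcol hcol'
      rfl
    calc ∑ b, ((Finset.range (mult a b)).filter (fun i => C a b i = some c)).card
        = (Finset.univ.biUnion (fun b => ({b} : Finset V) ×ˢ
          ((Finset.range (mult a b)).filter (fun i => C a b i = some c)))).card := by
          rw [Finset.card_biUnion]
          · refine Finset.sum_congr rfl fun b _ => by simp
          · intro u _ v _ huv
            simp only [Finset.disjoint_left]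
            rintro ⟨b, i⟩ hb1 hb2
            simp only [Finset.mem_product, Finset.mem_singleton] at hb1 hb2
            exact huv (hb1.1.symm.trans hb2.1)
      _ ≤ 1 := key
  · intro a b
    show ∑ c, ((Finset.range (mult a b)).filter (fun i => C a b i = some c)).card = mult a b
    have hfib := Finset.card_eq_sum_card_fiberwise
      (s := Finset.range (mult a b)) (t := (Finset.univ : Finset (Fin k)))
      (f := fun i => (C a b i).getD c₀) (fun i _ => Finset.mem_univ _)
    rw [Finset.card_range] at hfib
    refine Eq.trans ?_ hfib.symm
    refine Finset.sum_congr rfl fun c _ => ?_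
    have heq : (Finset.range (mult a b)).filter (fun i => C a b i = some c)
        = (Finset.range (mult a b)).filter (fun i => (C a b i).getD c₀ = c) := by
      refine Finset.filter_congr fun i hi => ?_
      rw [Finset.mem_range] at hi
      rcases hopt : C a b i with - | d
      · exact absurd hopt (hall a b i hi)
      · simp [hopt, eq_comm]
    rw [heq]

end

end Vz


/-- A multigraph on a finite vertex type `V` is given by its edge-multiplicity
function `mult : V → V → ℕ`.  Its chromatic index is at most `n` iff the edges can be
partitioned into `n` matchings, i.e. there exist symmetric `{0,1}`-valued
multiplicity functions `M i` (each with at most one edge at each vertex) summing to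
`mult`. -/
def MultiChromIndexLE {V : Type*} [Fintype V] (mult : V → V → ℕ) (n : ℕ) : Prop :=
  ∃ M : Fin n → V → V → ℕ,
    (∀ i x y, M i x y = M i y x) ∧
    (∀ i x, ∑ y, M i x y ≤ 1) ∧
    (∀ x y, ∑ i, M i x y = mult x y)

/-- Let `H` be a finite multigraph with maximum degree at most `k` and maximum edge
multiplicity at most `p`, and `U` a set of vertices.  If the induced sub-multigraph
on the complement of `U` has chromatic index at most `k`, and every vertex adjacent
to a vertex of `U` has degree at most `k - p`, then `χ'(H) ≤ k`. -/
theorem stmt_15 {V : Type*} [Fintype V] (mult : V → V → ℕ)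
    (hSymm : ∀ x y, mult x y = mult y x) (hLoopless : ∀ x, mult x x = 0)
    (k p : ℕ) (hDeg : ∀ x, ∑ y, mult x y ≤ k) (hMult : ∀ x y, mult x y ≤ p)
    (U : Set V) [DecidablePred (· ∈ U)]
    (h1 : MultiChromIndexLE (fun x y => if x ∉ U ∧ y ∉ U then mult x y else 0) k)
    (h2 : ∀ y : V, (∃ u ∈ U, 0 < mult y u) → ∑ z, mult y z ≤ k - p) :
    MultiChromIndexLE mult k := by
  classical
  have hterm : ∀ x y : V, mult x y ≤ ∑ z, mult x z := fun x y =>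
    Finset.single_le_sum (f := fun z => mult x z) (fun _ _ => Nat.zero_le _)
      (Finset.mem_univ y)
  rcases Nat.eq_zero_or_pos k with rfl | hk
  · refine ⟨fun _ _ _ => 0, by simp, by simp, ?_⟩
    intro x y
    have hd := hDeg x
    have ht := hterm x y
    simp only [Finset.univ_eq_empty, Finset.sum_empty]
    omega
  obtain ⟨M, hM1, hM2, hM3⟩ := h1
  have hle : ∀ a b : V, (fun x y => if x ∉ U ∧ y ∉ U then mult x y else 0) a b ≤ mult a b := by
    intro a b
    dsimp only
    split
    · exact le_rfl
    · exact Nat.zero_le _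
  obtain ⟨C₀, hS0, hD0, hP0, hcol0⟩ :=
    Vz.init_coloring (mult := mult)
      (mult' := fun x y => if x ∉ U ∧ y ∉ U then mult x y else 0) hle M hM1 hM2 hM3
  have hU' : ∀ z u : V, u ∈ U → 0 < mult z u → ∑ w, mult z w + p ≤ k := by
    intro z u hu hpos
    have h2z := h2 z ⟨u, hu, hpos⟩
    have ht := hterm z u
    omega
  have hinv0 : ∀ a b : V, ∀ j, j < mult a b → C₀ a b j = none → a ∈ U ∨ b ∈ U := by
    intro a b j hj hn
    by_contra hcon
    push_neg at hcon
    obtain ⟨haU, hbU⟩ := hcon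
    refine (hcol0 a b j ?_) hn
    rw [if_pos ⟨haU, hbU⟩]
    exact hj
  obtain ⟨C', q1, q2, q3, q4⟩ :=
    Vz.color_all hSymm hLoopless hMult U hDeg hU'
      (Vz.UC mult p C₀).card C₀ hS0 hD0 hP0 hinv0 le_rfl
  obtain ⟨Mf, m1, m2, m3⟩ :=
    Vz.final_matchings hSymm (⟨0, hk⟩ : Fin k) q1 q3 q4
  exact ⟨Mf, m1, m2, m3⟩
end
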